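/- arXiv:2410.22432 — 6 statements merged into one kernel-verified Lean document; each statement's English description precedes it below -/
import Mathlib

section
/- For all n and all subsets T of [n], the number of inversion sequences of length n whose set of occurrence positions of the consecutive pattern 1000 is exactly T equals the number of inversion sequences of length n whose set of occurrence positions of the consecutive pattern 1110 is exactly T (super strong Wilf equivalence of 1000 and 1110). -/
/-- Inversion sequences of length `n` (0-indexed: entry `i` lies in `Fin (i+1)`). -/
abbrev InvSeq (n : ℕ) := ∀ i : Fin n, Fin (i.val + 1)

/-- The entry of an inversion sequence at position `i`, as a natural number. -/
def ev {n : ℕ} (e : InvSeq n) (i : ℕ) : ℕ := if h : i < n then (e ⟨i, h⟩ : ℕ) else 0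

/-- Positions of occurrences of the consecutive pattern 1000
(`e i > e (i+1) = e (i+2) = e (i+3)`). -/
def Em1000 {n : ℕ} (e : InvSeq n) : Set ℕ :=
  {i | i + 3 < n ∧ ev e (i+1) < ev e i ∧ ev e (i+1) = ev e (i+2) ∧ ev e (i+2) = ev e (i+3)}

/-- Positions of occurrences of the consecutive pattern 1110
(`e i = e (i+1) = e (i+2) > e (i+3)`). -/
def Em1110 {n : ℕ} (e : InvSeq n) : Set ℕ :=
  {i | i + 3 < n ∧ ev e i = ev e (i+1) ∧ ev e (i+1) = ev e (i+2) ∧ ev e (i+3) < ev e (i+2)}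

/-!
Write a sequence by its runs `v₁^a₁ ⋯ v_k^a_k` (adjacent values distinct). An occurrence of 1000
is a descent `v_i > v_{i+1}` into a run with `a_{i+1} ≥ 3`, at position `a₁ + ⋯ + a_i - 1`; an
occurrence of 1110 is a descent out of a run with `a_i ≥ 3`, at position `a₁ + ⋯ + a_i - 3`.
The bijection keeps the values and redistributes the lengths from left to right, carrying a
pending length `p` for the current value `v`: at an ascent the run of `v` gets `p` and the next
run becomes pending; at a descent into a run of length `b ≤ 2` the run of `v` gets `b` and `p`
stays pending; at a descent into a run of length `b ≥ 3` the run of `v` gets `p + 2` and `b - 2`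
becomes pending. Every 1000 thus becomes a 1110 at the same position and no other 1110 appears.
A run starts earlier than before only right after a descent, where its value is below a value
already placed, so inversion sequences go to inversion sequences; and since the emitted length is
`≤ 2` exactly at the short descents, every step can be undone.
-/

namespace SuperStrongWilf

open List

section Runs

def decodeRuns : List (ℕ × ℕ) → List ℕ
  | [] => []
  | (v, a) :: R => replicate a v ++ decodeRuns R

def IsRunsAfter : ℕ → List (ℕ × ℕ) → Prop
  | _, [] => True
  | v, (w, b) :: R => 0 < b ∧ w ≠ v ∧ IsRunsAfter w R

def IsRuns : List (ℕ × ℕ) → Prop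
  | [] => True
  | (v, a) :: R => 0 < a ∧ IsRunsAfter v R

def consRun (x : ℕ) : List (ℕ × ℕ) → List (ℕ × ℕ)
  | [] => [(x, 1)]
  | (v, a) :: R => if v = x then (v, a + 1) :: R else (x, 1) :: (v, a) :: R

def encodeRuns : List ℕ → List (ℕ × ℕ)
  | [] => []
  | x :: l => consRun x (encodeRuns l)

variable {v x : ℕ} {R : List (ℕ × ℕ)}

lemma IsRunsAfter.isRuns : ∀ {R : List (ℕ × ℕ)}, IsRunsAfter v R → IsRuns R
  | [], _ => trivial
  | (_, _) :: _, ⟨hb, _, hR⟩ => ⟨hb, hR⟩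

lemma length_decodeRuns_cons (v a : ℕ) (R : List (ℕ × ℕ)) :
    (decodeRuns ((v, a) :: R)).length = a + (decodeRuns R).length := by
  simp [decodeRuns]

lemma head?_decodeRuns_ne (hR : IsRunsAfter v R) : (decodeRuns R).head? ≠ some v := by
  obtain _ | ⟨⟨w, _ | b⟩, R⟩ := R
  · simp [decodeRuns]
  · exact absurd hR.1 (lt_irrefl 0)
  · simpa [decodeRuns, replicate_succ] using hR.2.1

lemma decodeRuns_consRun (x : ℕ) (R : List (ℕ × ℕ)) :
    decodeRuns (consRun x R) = x :: decodeRuns R := by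
  obtain _ | ⟨⟨v, a⟩, R⟩ := R
  · simp [consRun, decodeRuns]
  · by_cases h : v = x
    · subst h
      simp [consRun, decodeRuns, replicate_succ]
    · simp [consRun, decodeRuns, h]

lemma decodeRuns_encodeRuns (l : List ℕ) : decodeRuns (encodeRuns l) = l := by
  induction l with
  | nil => rfl
  | cons x l ih => rw [encodeRuns, decodeRuns_consRun, ih]

lemma isRuns_consRun (x : ℕ) (hR : IsRuns R) : IsRuns (consRun x R) := by
  obtain _ | ⟨⟨v, a⟩, R⟩ := R
  · exact ⟨one_pos, trivial⟩
  · by_cases h : v = x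
    · simpa [consRun, h, IsRuns] using hR.2
    · simpa [consRun, h, IsRuns, IsRunsAfter] using hR

lemma isRuns_encodeRuns (l : List ℕ) : IsRuns (encodeRuns l) := by
  induction l with
  | nil => trivial
  | cons x l ih => exact isRuns_consRun x ih

lemma consRun_of_isRunsAfter (hR : IsRunsAfter x R) : consRun x R = (x, 1) :: R := by
  obtain _ | ⟨⟨v, a⟩, R⟩ := R
  · rfl
  · simp [consRun, hR.2.1]

lemma encodeRuns_replicate_append (hR : IsRunsAfter v R) (henc : encodeRuns (decodeRuns R) = R)
    (k : ℕ) : encodeRuns (replicate (k + 1) v ++ decodeRuns R) = (v, k + 1) :: R := by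
  induction k with
  | zero => rw [replicate_one, singleton_append, encodeRuns, henc, consRun_of_isRunsAfter hR]
  | succ k ih => rw [replicate_succ, cons_append, encodeRuns, ih, consRun, if_pos rfl]

lemma encodeRuns_decodeRuns (hR : IsRuns R) : encodeRuns (decodeRuns R) = R := by
  induction R with
  | nil => rfl
  | cons va R ih =>
    obtain ⟨v, a⟩ := va
    obtain ⟨ha, hR⟩ := hR
    obtain ⟨k, rfl⟩ := Nat.exists_eq_add_one.2 ha
    exact encodeRuns_replicate_append hR (ih hR.isRuns) k

lemma decodeRuns_injOn : Set.InjOn decodeRuns {R | IsRuns R} := fun R hR S hS h => by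
  rw [← encodeRuns_decodeRuns hR, ← encodeRuns_decodeRuns hS, h]

end Runs

section Occurrences

def occ1000 (l : List ℕ) : Set ℕ := {i | ∃ x y r, l.drop i = x :: y :: y :: y :: r ∧ y < x}

def occ1110 (l : List ℕ) : Set ℕ := {i | ∃ x y r, l.drop i = x :: x :: x :: y :: r ∧ y < x}

lemma exists_drop_eq_cons₄_iff (l : List ℕ) (i x y z w : ℕ) :
    (∃ r, l.drop i = x :: y :: z :: w :: r) ↔ i + 3 < l.length ∧
      l.getD i 0 = x ∧ l.getD (i + 1) 0 = y ∧ l.getD (i + 2) 0 = z ∧ l.getD (i + 3) 0 = w := by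
  constructor
  · rintro ⟨r, h⟩
    have hlen := congrArg length h
    have hget (k : ℕ) : l.getD (i + k) 0 = (x :: y :: z :: w :: r).getD k 0 := by
      rw [← h, getD_eq_getElem?_getD, getD_eq_getElem?_getD, getElem?_drop]
    simp only [length_drop, length_cons] at hlen
    exact ⟨by omega, hget 0, hget 1, hget 2, hget 3⟩
  · rintro ⟨hi, rfl, rfl, rfl, rfl⟩
    refine ⟨l.drop (i + 4), ?_⟩
    rw [drop_eq_getElem_cons (by omega), drop_eq_getElem_cons (by omega),
      drop_eq_getElem_cons (by omega), drop_eq_getElem_cons (by omega)]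
    simp [getD_eq_getElem?_getD, hi, show i + 2 < l.length by omega,
      show i + 1 < l.length by omega, show i < l.length by omega]

lemma mem_occ1000_iff (l : List ℕ) (i : ℕ) : i ∈ occ1000 l ↔ i + 3 < l.length ∧
    l.getD (i + 1) 0 < l.getD i 0 ∧ l.getD (i + 1) 0 = l.getD (i + 2) 0 ∧
      l.getD (i + 2) 0 = l.getD (i + 3) 0 := by
  simp only [occ1000, Set.mem_ofPred_eq]
  constructor
  · rintro ⟨x, y, r, h, hyx⟩
    obtain ⟨hi, h0, h1, h2, h3⟩ := (exists_drop_eq_cons₄_iff l i x y y y).1 ⟨r, h⟩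
    omega
  · rintro ⟨hi, hlt, h12, h23⟩
    obtain ⟨r, h⟩ := (exists_drop_eq_cons₄_iff l i _ _ _ _).2
      ⟨hi, rfl, rfl, h12.symm, (h12.trans h23).symm⟩
    exact ⟨_, _, r, h, hlt⟩

lemma mem_occ1110_iff (l : List ℕ) (i : ℕ) : i ∈ occ1110 l ↔ i + 3 < l.length ∧
    l.getD i 0 = l.getD (i + 1) 0 ∧ l.getD (i + 1) 0 = l.getD (i + 2) 0 ∧
      l.getD (i + 3) 0 < l.getD (i + 2) 0 := by
  simp only [occ1110, Set.mem_ofPred_eq]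
  constructor
  · rintro ⟨x, y, r, h, hyx⟩
    obtain ⟨hi, h0, h1, h2, h3⟩ := (exists_drop_eq_cons₄_iff l i x x x y).1 ⟨r, h⟩
    omega
  · rintro ⟨hi, h01, h12, hlt⟩
    obtain ⟨r, h⟩ := (exists_drop_eq_cons₄_iff l i _ _ _ _).2
      ⟨hi, rfl, h01.symm, (h01.trans h12).symm, rfl⟩
    exact ⟨_, _, r, h, h01.trans h12 ▸ hlt⟩

lemma mem_image_add_right_iff {S : Set ℕ} {a i : ℕ} : i ∈ (· + a) '' S ↔ a ≤ i ∧ i - a ∈ S := by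
  constructor
  · rintro ⟨j, hj, rfl⟩
    exact ⟨Nat.le_add_left a j, by simpa using hj⟩
  · rintro ⟨hi, h⟩
    exact ⟨i - a, h, Nat.sub_add_cancel hi⟩

variable {a v b w y : ℕ} {u : List ℕ}

lemma drop_replicate_append (i : ℕ) :
    (replicate a v ++ u).drop i = replicate (a - i) v ++ u.drop (i - a) := by
  simp [drop_append]

lemma occ1000_replicate (a v : ℕ) : occ1000 (replicate a v) = ∅ := by
  refine Set.eq_empty_of_forall_notMem fun i ⟨x, y, r, h, hyx⟩ => ?_
  have hx : x ∈ drop i (replicate a v) := by simp [h]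
  have hy : y ∈ drop i (replicate a v) := by simp [h]
  rw [drop_replicate] at hx hy
  rw [eq_of_mem_replicate hx, eq_of_mem_replicate hy] at hyx
  exact lt_irrefl v hyx

lemma occ1110_replicate (a v : ℕ) : occ1110 (replicate a v) = ∅ := by
  refine Set.eq_empty_of_forall_notMem fun i ⟨x, y, r, h, hyx⟩ => ?_
  have hx : x ∈ drop i (replicate a v) := by simp [h]
  have hy : y ∈ drop i (replicate a v) := by simp [h]
  rw [drop_replicate] at hx hy
  rw [eq_of_mem_replicate hx, eq_of_mem_replicate hy] at hyx
  exact lt_irrefl v hyx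

lemma exists_replicate_append_eq_cons₃ (hb : 0 < b) (hu : u.head? ≠ some w) :
    (∃ r, replicate b w ++ u = y :: y :: y :: r) ↔ y = w ∧ 3 ≤ b := by
  obtain _ | _ | _ | b := b
  · omega
  all_goals cases u <;> simp_all [replicate_succ, eq_comm] <;> grind

lemma pattern1000_replicate_append_iff (ha : 0 < a) (hb : 0 < b) (hu : u.head? ≠ some w) :
    (∃ x y r, replicate a v ++ (replicate b w ++ u) = x :: y :: y :: y :: r ∧ y < x) ↔
      a = 1 ∧ w < v ∧ 3 ≤ b := by
  obtain _ | _ | a := a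
  · omega
  · simp [exists_replicate_append_eq_cons₃ hb hu, and_comm]
  · simp only [replicate_succ, cons_append, cons.injEq]
    constructor
    · rintro ⟨x, y, r, ⟨rfl, rfl, -⟩, hyx⟩
      omega
    · omega

lemma pattern1110_replicate_append_iff (ha : 0 < a) (hb : 0 < b) (hwv : w ≠ v) :
    (∃ x y r, replicate a v ++ (replicate b w ++ u) = x :: x :: x :: y :: r ∧ y < x) ↔
      a = 3 ∧ w < v := by
  obtain _ | _ | _ | _ | a := a
  · omega
  all_goals obtain _ | b := b
  all_goals simp only [replicate_succ, replicate_zero, cons_append, nil_append, cons.injEq]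
  all_goals first | omega | grind

lemma occ1000_replicate_append (ha : 0 < a) (hb : 0 < b) (hu : u.head? ≠ some w) :
    occ1000 (replicate a v ++ (replicate b w ++ u)) =
      (if w < v ∧ 3 ≤ b then {a - 1} else ∅) ∪ (· + a) '' occ1000 (replicate b w ++ u) := by
  ext i
  rw [Set.mem_union, mem_image_add_right_iff]
  simp only [occ1000, Set.mem_ofPred_eq]
  rw [drop_replicate_append]
  rcases lt_or_ge i a with hi | hi
  · rw [Nat.sub_eq_zero_of_le hi.le, drop_zero, pattern1000_replicate_append_iff (by omega) hb hu]
    split_ifs <;> simp_all <;> omega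
  · have hne : i ∉ (if w < v ∧ 3 ≤ b then {a - 1} else (∅ : Set ℕ)) := by
      split_ifs <;> simp
      omega
    rw [Nat.sub_eq_zero_of_le hi, replicate_zero, nil_append]
    simp only [hne, hi, false_or, true_and]

lemma occ1110_replicate_append (ha : 0 < a) (hb : 0 < b) (hwv : w ≠ v) :
    occ1110 (replicate a v ++ (replicate b w ++ u)) =
      (if w < v ∧ 3 ≤ a then {a - 3} else ∅) ∪ (· + a) '' occ1110 (replicate b w ++ u) := by
  ext i
  rw [Set.mem_union, mem_image_add_right_iff]
  simp only [occ1110, Set.mem_ofPred_eq]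
  rw [drop_replicate_append]
  rcases lt_or_ge i a with hi | hi
  · rw [Nat.sub_eq_zero_of_le hi.le, drop_zero, pattern1110_replicate_append_iff (by omega) hb hwv]
    split_ifs <;> simp_all <;> omega
  · have hne : i ∉ (if w < v ∧ 3 ≤ a then {a - 3} else (∅ : Set ℕ)) := by
      split_ifs <;> simp
      omega
    rw [Nat.sub_eq_zero_of_le hi, replicate_zero, nil_append]
    simp only [hne, hi, false_or, true_and]

variable {R : List (ℕ × ℕ)}

lemma occ1000_decodeRuns_cons_cons (ha : 0 < a) (hR : IsRunsAfter v ((w, b) :: R)) :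
    occ1000 (decodeRuns ((v, a) :: (w, b) :: R)) =
      (if w < v ∧ 3 ≤ b then {a - 1} else ∅) ∪ (· + a) '' occ1000 (decodeRuns ((w, b) :: R)) :=
  occ1000_replicate_append ha hR.1 (head?_decodeRuns_ne hR.2.2)

lemma occ1110_decodeRuns_cons_cons (ha : 0 < a) (hR : IsRunsAfter v ((w, b) :: R)) :
    occ1110 (decodeRuns ((v, a) :: (w, b) :: R)) =
      (if w < v ∧ 3 ≤ a then {a - 3} else ∅) ∪ (· + a) '' occ1110 (decodeRuns ((w, b) :: R)) :=
  occ1110_replicate_append ha hR.1 hR.2.1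

end Occurrences

section Reshape

/-- Given the length `p` still owed to the current value `v` and the next run `(w, b)`, returns
the length of the run of `v` and the length then owed to `w`. -/
def reshapeStep (p v w b : ℕ) : ℕ × ℕ :=
  if w < v then if b ≤ 2 then (b, p) else (p + 2, b - 2) else (p, b)

def reshape : ℕ → ℕ → List (ℕ × ℕ) → List (ℕ × ℕ)
  | p, v, [] => [(v, p)]
  | p, v, (w, b) :: R => (v, (reshapeStep p v w b).1) :: reshape (reshapeStep p v w b).2 w R

variable {p q v w b c s : ℕ} {R S : List (ℕ × ℕ)}

lemma reshapeStep_fst_add_snd : (reshapeStep p v w b).1 + (reshapeStep p v w b).2 = p + b := by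
  unfold reshapeStep
  split_ifs <;> simp <;> omega

lemma reshapeStep_pos (hp : 0 < p) (hb : 0 < b) :
    0 < (reshapeStep p v w b).1 ∧ 0 < (reshapeStep p v w b).2 := by
  unfold reshapeStep
  split_ifs <;> simp <;> omega

lemma lt_or_le_reshapeStep_fst : w < v ∨ p ≤ (reshapeStep p v w b).1 := by
  unfold reshapeStep
  split_ifs <;> simp_all

lemma reshapeStep_descent_iff (hp : 0 < p) :
    w < v ∧ 3 ≤ b ↔ w < v ∧ 3 ≤ (reshapeStep p v w b).1 := by
  unfold reshapeStep
  split_ifs <;> simp <;> omega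

lemma reshapeStep_fst_of_descent (hwv : w < v) (hb : 3 ≤ b) :
    (reshapeStep p v w b).1 = p + 2 := by
  simp [reshapeStep, hwv, show ¬b ≤ 2 by omega]

lemma reshapeStep_injective (hp : 0 < p) (hb : 0 < b) (hq : 0 < q) (hc : 0 < c)
    (h : reshapeStep p v w b = reshapeStep q v w c) : p = q ∧ b = c := by
  unfold reshapeStep at h
  split_ifs at h <;> simp at h <;> omega

lemma exists_reshape_eq_cons (p v : ℕ) (R : List (ℕ × ℕ)) :
    ∃ c G, reshape p v R = (v, c) :: G := by
  obtain _ | ⟨⟨w, b⟩, R⟩ := R <;> exact ⟨_, _, rfl⟩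

lemma reshape_ne_nil (p v : ℕ) (R : List (ℕ × ℕ)) : reshape p v R ≠ [] := by
  obtain ⟨c, G, hG⟩ := exists_reshape_eq_cons p v R
  simp [hG]

lemma eq_of_reshape_eq_reshape (h : reshape p v R = reshape q w S) : v = w := by
  obtain ⟨_, G, hG⟩ := exists_reshape_eq_cons p v R
  obtain ⟨_, G', hG'⟩ := exists_reshape_eq_cons q w S
  rw [hG, hG', cons.injEq, Prod.mk.injEq] at h
  exact h.1.1

lemma isRunsAfter_reshape {u : ℕ} (hp : 0 < p) (hvu : v ≠ u) (hR : IsRunsAfter v R) :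
    IsRunsAfter u (reshape p v R) := by
  induction R generalizing p v u with
  | nil => exact ⟨hp, hvu, trivial⟩
  | cons wb R ih =>
    obtain ⟨w, b⟩ := wb
    obtain ⟨hb, hwv, hR⟩ := hR
    obtain ⟨hc, hp'⟩ := reshapeStep_pos (v := v) (w := w) hp hb
    exact ⟨hc, hvu, ih hp' hwv hR⟩

lemma isRuns_reshape (hp : 0 < p) (hR : IsRunsAfter v R) : IsRuns (reshape p v R) := by
  obtain _ | ⟨⟨w, b⟩, R⟩ := R
  · exact ⟨hp, trivial⟩
  · obtain ⟨hc, hp'⟩ := reshapeStep_pos (v := v) (w := w) hp hR.1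
    exact ⟨hc, isRunsAfter_reshape hp' hR.2.1 hR.2.2⟩

lemma length_decodeRuns_reshape (p v : ℕ) (R : List (ℕ × ℕ)) :
    (decodeRuns (reshape p v R)).length = p + (decodeRuns R).length := by
  induction R generalizing p v with
  | nil => simp [reshape, decodeRuns]
  | cons wb R ih =>
    obtain ⟨w, b⟩ := wb
    rw [reshape, length_decodeRuns_cons, ih, length_decodeRuns_cons, ← add_assoc,
      reshapeStep_fst_add_snd, add_assoc]

lemma reshape_injective (hp : 0 < p) (hq : 0 < q) (hR : IsRunsAfter v R) (hS : IsRunsAfter v S)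
    (h : reshape p v R = reshape q v S) : p = q ∧ R = S := by
  induction R generalizing p q v S with
  | nil =>
    obtain _ | ⟨⟨x, c⟩, S⟩ := S
    · simpa [reshape] using h
    · simp [reshape, reshape_ne_nil] at h
  | cons wb R ih =>
    obtain ⟨w, b⟩ := wb
    obtain _ | ⟨⟨x, c⟩, S⟩ := S
    · simp [reshape, reshape_ne_nil] at h
    obtain ⟨hb, -, hR⟩ := hR
    obtain ⟨hc, -, hS⟩ := hS
    simp only [reshape, cons.injEq, Prod.mk.injEq, true_and] at h
    obtain ⟨hfst, htail⟩ := h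
    obtain rfl := eq_of_reshape_eq_reshape htail
    obtain ⟨hsnd, rfl⟩ := ih (reshapeStep_pos hp hb).2 (reshapeStep_pos hq hc).2 hR hS htail
    obtain ⟨rfl, rfl⟩ := reshapeStep_injective hp hb hq hc (Prod.ext hfst hsnd)
    exact ⟨rfl, rfl⟩

lemma image_add_eq_image_add {X Y : Set ℕ} {k l m n : ℕ} (h : (· + k) '' X = (· + l) '' Y)
    (hsum : m + l = n + k) : (· + m) '' X = (· + n) '' Y := by
  refine Set.image_injective.2 (add_left_injective k) ?_
  have key := congrArg ((· + m) '' ·) h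
  simp only [Set.image_image] at key ⊢
  have e₁ : (fun x => x + m + k) = (fun x => x + k + m) := funext fun x => by omega
  have e₂ : (fun x => x + n + k) = (fun x => x + l + m) := funext fun x => by omega
  rw [e₁, e₂]
  exact key

/-- In the full sequences the two suffixes start at positions differing by `a - p` (the original
run of `v` and the pending length `p` end together), hence the shifts. -/
theorem image_occ1000_eq_image_occ1110_reshape {a : ℕ} (hp : 0 < p) (ha : 0 < a)
    (hR : IsRunsAfter v R) :
    (· + p) '' occ1000 (decodeRuns ((v, a) :: R)) =
      (· + a) '' occ1110 (decodeRuns (reshape p v R)) := by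
  induction R generalizing p v a with
  | nil =>
    simp [reshape, decodeRuns, occ1000_replicate, occ1110_replicate]
  | cons wb R ih =>
    obtain ⟨w, b⟩ := wb
    obtain ⟨hb, hwv, hR⟩ := hR
    obtain ⟨hc, hp'⟩ := reshapeStep_pos (v := v) (w := w) hp hb
    obtain ⟨c', G, hG⟩ := exists_reshape_eq_cons (reshapeStep p v w b).2 w R
    have hG_runs : IsRunsAfter v ((w, c') :: G) := hG ▸ isRunsAfter_reshape hp' hwv hR
    rw [occ1000_decodeRuns_cons_cons ha ⟨hb, hwv, hR⟩, reshape, hG,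
      occ1110_decodeRuns_cons_cons hc hG_runs, ← hG, Set.image_union, Set.image_union]
    congr 1
    · by_cases h : w < v ∧ 3 ≤ b
      · rw [if_pos h, if_pos ((reshapeStep_descent_iff hp).1 h),
          reshapeStep_fst_of_descent h.1 h.2, Set.image_singleton, Set.image_singleton]
        congr 1
        omega
      · rw [if_neg h, if_neg (mt (reshapeStep_descent_iff hp).2 h), Set.image_empty,
          Set.image_empty]
    · simp only [Set.image_image, add_assoc]
      refine image_add_eq_image_add (ih hp' hb hR) ?_
      have := reshapeStep_fst_add_snd (p := p) (v := v) (w := w) (b := b)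
      omega

def RunsBounded : ℕ → List (ℕ × ℕ) → Prop
  | _, [] => True
  | s, (v, a) :: R => v ≤ s ∧ RunsBounded (s + a) R

lemma runsBounded_reshape (hv : v ≤ s) (hR : RunsBounded (s + p) R) :
    RunsBounded s (reshape p v R) := by
  induction R generalizing p v s with
  | nil => exact ⟨hv, trivial⟩
  | cons wb R ih =>
    obtain ⟨w, b⟩ := wb
    obtain ⟨hw, hR⟩ := hR
    refine ⟨hv, ih ?_ ?_⟩
    · rcases lt_or_le_reshapeStep_fst (p := p) (v := v) (w := w) (b := b) with h | h <;> omega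
    · rwa [add_assoc, reshapeStep_fst_add_snd, ← add_assoc]

end Reshape

lemma forall_getD_replicate_append_le_iff {a v s : ℕ} {l : List ℕ} (ha : 0 < a) :
    (∀ i, (replicate a v ++ l).getD i 0 ≤ s + i) ↔ v ≤ s ∧ ∀ i, l.getD i 0 ≤ s + a + i := by
  constructor
  · intro h
    refine ⟨?_, fun i => ?_⟩
    · have := h 0
      rwa [getD_append _ _ _ _ (by simpa), getD_replicate _ ha, add_zero] at this
    · have := h (a + i)
      rwa [getD_append_right _ _ _ _ (by simp), length_replicate, Nat.add_sub_cancel_left,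
        ← add_assoc] at this
  · rintro ⟨hv, hl⟩ i
    rcases lt_or_ge i a with hi | hi
    · rw [getD_append _ _ _ _ (by simpa), getD_replicate _ hi]
      omega
    · rw [getD_append_right _ _ _ _ (by simpa), length_replicate]
      have := hl (i - a)
      omega

lemma runsBounded_iff {s : ℕ} {R : List (ℕ × ℕ)} (hR : IsRuns R) :
    RunsBounded s R ↔ ∀ i, (decodeRuns R).getD i 0 ≤ s + i := by
  induction R generalizing s with
  | nil => simp [RunsBounded, decodeRuns]
  | cons va R ih =>
    obtain ⟨v, a⟩ := va
    rw [RunsBounded, decodeRuns, forall_getD_replicate_append_le_iff hR.1, ih hR.2.isRuns]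

section ReshapeRuns

def reshapeRuns : List (ℕ × ℕ) → List (ℕ × ℕ)
  | [] => []
  | (v, a) :: R => reshape a v R

variable {R : List (ℕ × ℕ)}

lemma isRuns_reshapeRuns (hR : IsRuns R) : IsRuns (reshapeRuns R) := by
  obtain _ | ⟨⟨v, a⟩, R⟩ := R
  · trivial
  · exact isRuns_reshape hR.1 hR.2

lemma length_decodeRuns_reshapeRuns (R : List (ℕ × ℕ)) :
    (decodeRuns (reshapeRuns R)).length = (decodeRuns R).length := by
  obtain _ | ⟨⟨v, a⟩, R⟩ := R
  · rfl
  · rw [reshapeRuns, length_decodeRuns_reshape, length_decodeRuns_cons]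

lemma occ1000_decodeRuns_eq_occ1110_reshapeRuns (hR : IsRuns R) :
    occ1000 (decodeRuns R) = occ1110 (decodeRuns (reshapeRuns R)) := by
  obtain _ | ⟨⟨v, a⟩, R⟩ := R
  · simp [reshapeRuns, decodeRuns, occ1000, occ1110]
  · exact Set.image_injective.2 (add_left_injective a)
      (image_occ1000_eq_image_occ1110_reshape hR.1 hR.1 hR.2)

lemma runsBounded_reshapeRuns {s : ℕ} (hR : RunsBounded s R) :
    RunsBounded s (reshapeRuns R) := by
  obtain _ | ⟨⟨v, a⟩, R⟩ := R
  · trivial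
  · exact runsBounded_reshape hR.1 hR.2

lemma reshapeRuns_injOn : Set.InjOn reshapeRuns {R | IsRuns R} := by
  rintro (_ | ⟨⟨v, a⟩, R⟩) hR (_ | ⟨⟨w, b⟩, S⟩) hS h
  · rfl
  · exact absurd h.symm (reshape_ne_nil b w S)
  · exact absurd h (reshape_ne_nil a v R)
  · obtain rfl := eq_of_reshape_eq_reshape h
    obtain ⟨rfl, rfl⟩ := reshape_injective hR.1 hS.1 hR.2 hS.2 h
    rfl

end ReshapeRuns

section ReshapeList

def reshapeList (l : List ℕ) : List ℕ := decodeRuns (reshapeRuns (encodeRuns l))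

lemma length_reshapeList (l : List ℕ) : (reshapeList l).length = l.length := by
  conv_rhs => rw [← decodeRuns_encodeRuns l]
  exact length_decodeRuns_reshapeRuns _

lemma occ1000_eq_occ1110_reshapeList (l : List ℕ) : occ1000 l = occ1110 (reshapeList l) := by
  conv_lhs => rw [← decodeRuns_encodeRuns l]
  exact occ1000_decodeRuns_eq_occ1110_reshapeRuns (isRuns_encodeRuns l)

lemma getD_reshapeList_le {l : List ℕ} (hl : ∀ i, l.getD i 0 ≤ i) (i : ℕ) :
    (reshapeList l).getD i 0 ≤ i := by
  have hR := isRuns_encodeRuns l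
  have hbd : RunsBounded 0 (encodeRuns l) :=
    (runsBounded_iff hR).2 (by simpa [decodeRuns_encodeRuns] using hl)
  simpa [reshapeList] using
    (runsBounded_iff (isRuns_reshapeRuns hR)).1 (runsBounded_reshapeRuns hbd) i

lemma reshapeList_injective : Function.Injective reshapeList := by
  intro l m h
  have hR := isRuns_encodeRuns l
  have hS := isRuns_encodeRuns m
  rw [← decodeRuns_encodeRuns l, ← decodeRuns_encodeRuns m,
    reshapeRuns_injOn hR hS (decodeRuns_injOn (isRuns_reshapeRuns hR) (isRuns_reshapeRuns hS) h)]

end ReshapeList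

section InvSeq

variable {n : ℕ}

def entries (e : InvSeq n) : List ℕ := List.ofFn fun i => (e i : ℕ)

lemma length_entries (e : InvSeq n) : (entries e).length = n := by simp [entries]

lemma getD_entries (e : InvSeq n) (i : ℕ) : (entries e).getD i 0 = ev e i := by
  by_cases h : i < n <;> simp [entries, ev, h]

lemma getD_entries_le (e : InvSeq n) (i : ℕ) : (entries e).getD i 0 ≤ i := by
  rw [getD_entries, ev]
  split_ifs
  · exact Nat.le_of_lt_succ (Fin.is_lt _)
  · exact Nat.zero_le i

lemma entries_injective : Function.Injective (entries (n := n)) :=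
  fun _ _ h => funext fun i => Fin.ext (congrFun (List.ofFn_injective h) i)

lemma Em1000_eq_occ1000 (e : InvSeq n) : Em1000 e = occ1000 (entries e) := by
  ext i
  rw [mem_occ1000_iff, length_entries]
  simp only [getD_entries]
  rfl

lemma Em1110_eq_occ1110 (e : InvSeq n) : Em1110 e = occ1110 (entries e) := by
  ext i
  rw [mem_occ1110_iff, length_entries]
  simp only [getD_entries]
  rfl

def reshapeInvSeq (e : InvSeq n) : InvSeq n := fun i =>
  ⟨(reshapeList (entries e)).getD i 0,
    Nat.lt_succ_of_le (getD_reshapeList_le (getD_entries_le e) i)⟩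

lemma entries_reshapeInvSeq (e : InvSeq n) :
    entries (reshapeInvSeq e) = reshapeList (entries e) := by
  refine ext_getElem (by rw [length_entries, length_reshapeList, length_entries])
    fun i _ h => ?_
  simp only [entries, List.getElem_ofFn, reshapeInvSeq]
  exact getD_eq_getElem _ _ h

lemma reshapeInvSeq_injective : Function.Injective (reshapeInvSeq (n := n)) := fun e f h =>
  entries_injective <| reshapeList_injective <| by
    rw [← entries_reshapeInvSeq, ← entries_reshapeInvSeq, h]

lemma Em1000_eq_Em1110_reshapeInvSeq (e : InvSeq n) : Em1000 e = Em1110 (reshapeInvSeq e) := by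
  rw [Em1000_eq_occ1000, Em1110_eq_occ1110, entries_reshapeInvSeq, occ1000_eq_occ1110_reshapeList]

end InvSeq

end SuperStrongWilf

/-- Super strong Wilf equivalence of 1000 and 1110. -/
theorem superStrongWilf_1000_1110 (n : ℕ) (T : Set ℕ) :
    Nat.card {e : InvSeq n // Em1000 e = T} = Nat.card {e : InvSeq n // Em1110 e = T} :=
  Nat.card_congr <| Equiv.subtypeEquiv
    (Equiv.ofBijective SuperStrongWilf.reshapeInvSeq
      (Finite.injective_iff_bijective.1 SuperStrongWilf.reshapeInvSeq_injective))
    fun e => by rw [SuperStrongWilf.Em1000_eq_Em1110_reshapeInvSeq, Equiv.ofBijective_apply]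
end

section
/- For all n and all subsets T of [n], the number of inversion sequences of length n whose set of occurrence positions of the consecutive pattern 2100 is exactly T equals the number of inversion sequences of length n whose set of occurrence positions of the consecutive pattern 2210 is exactly T. -/
/-- Positions of occurrences of the consecutive pattern 2100
(`e i > e (i+1) > e (i+2) = e (i+3)`). -/
def Em2100 {n : ℕ} (e : InvSeq n) : Set ℕ :=
  {i | i + 3 < n ∧ ev e (i+1) < ev e i ∧ ev e (i+2) < ev e (i+1) ∧ ev e (i+2) = ev e (i+3)}

/-- Positions of occurrences of the consecutive pattern 2210
(`e i = e (i+1) > e (i+2) > e (i+3)`). -/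
def Em2210 {n : ℕ} (e : InvSeq n) : Set ℕ :=
  {i | i + 3 < n ∧ ev e i = ev e (i+1) ∧ ev e (i+2) < ev e (i+1) ∧ ev e (i+3) < ev e (i+2)}

/-!
Cut a sequence `y` at its first and last position, at both ends of every ascent, and at both
ends of every occurrence of 2100. Between consecutive cuts `L < R` the sequence is weakly
decreasing; reversing and complementing every such piece, `y u ↦ y L + y R - y (L + R - u)`,
keeps the values of the piece between `y R` and `y L` (so inversion sequences go to inversion
sequences) and keeps the ascents, hence the cuts, so it is an involution once the cut
occurrences are fixed. An occurrence `a > b > c = c` of 2100 fills a whole piece and becomes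
`a = a > a + c - b > c`, an occurrence of 2210. Conversely, as 2100 and 2210 are weakly
decreasing, reverse-complements of each other, and no two occurrences of either share two
entries, every occurrence of 2210 in the image comes from one of 2100. So the image has its
2210 occurrences exactly where the original has its 2100 occurrences, and flipping it along
them recovers the original.
-/

namespace SuperStrongWilf

open Set

section Pieces

open scoped Classical

def IsCut (n : ℕ) (y : ℕ → ℕ) (S : Set ℕ) (p : ℕ) : Prop :=
  p = 0 ∨ n ≤ p + 1 ∨ y (p - 1) < y p ∨ y p < y (p + 1) ∨ p ∈ S ∨ (3 ≤ p ∧ p - 3 ∈ S)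

theorem exists_isCut_gt (n : ℕ) (y : ℕ → ℕ) (S : Set ℕ) (p : ℕ) : ∃ c, p < c ∧ IsCut n y S c :=
  ⟨p + n + 1, by omega, Or.inr (Or.inl (by omega))⟩

noncomputable def cutBefore (n : ℕ) (y : ℕ → ℕ) (S : Set ℕ) (p : ℕ) : ℕ :=
  Nat.findGreatest (IsCut n y S) (p - 1)

noncomputable def cutAfter (n : ℕ) (y : ℕ → ℕ) (S : Set ℕ) (p : ℕ) : ℕ :=
  Nat.find (exists_isCut_gt n y S p)

noncomputable def flipPieces (n : ℕ) (y : ℕ → ℕ) (S : Set ℕ) (p : ℕ) : ℕ :=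
  if IsCut n y S p then y p
  else y (cutBefore n y S p) + y (cutAfter n y S p) - y (cutBefore n y S p + cutAfter n y S p - p)

variable {n : ℕ} {y : ℕ → ℕ} {S : Set ℕ} {c m p t u : ℕ}

theorem isCut_of_le (h : n ≤ p + 1) : IsCut n y S p := Or.inr (Or.inl h)

theorem isCut_of_lt_succ (h : y p < y (p + 1)) : IsCut n y S p :=
  Or.inr (Or.inr (Or.inr (Or.inl h)))

theorem isCut_succ_of_lt_succ (h : y p < y (p + 1)) : IsCut n y S (p + 1) :=
  Or.inr (Or.inr (Or.inl h))

theorem isCut_of_mem (h : p ∈ S) : IsCut n y S p := Or.inr (Or.inr (Or.inr (Or.inr (Or.inl h))))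

theorem isCut_add_three_of_mem (h : p ∈ S) : IsCut n y S (p + 3) :=
  Or.inr (Or.inr (Or.inr (Or.inr (Or.inr ⟨by omega, by simpa using h⟩))))

theorem cutBefore_lt (hp : p ≠ 0) : cutBefore n y S p < p :=
  (Nat.findGreatest_le (p - 1)).trans_lt (by omega)

theorem cutBefore_lt_of_not_isCut (hp : ¬ IsCut n y S p) : cutBefore n y S p < p :=
  cutBefore_lt fun h => hp (Or.inl h)

theorem isCut_cutBefore (p : ℕ) : IsCut n y S (cutBefore n y S p) :=
  Nat.findGreatest_spec (Nat.zero_le _) (Or.inl rfl)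

theorem le_cutBefore (hc : IsCut n y S c) (h : c < p) : c ≤ cutBefore n y S p :=
  Nat.le_findGreatest (by omega) hc

theorem lt_cutAfter (p : ℕ) : p < cutAfter n y S p := (Nat.find_spec (exists_isCut_gt n y S p)).1

theorem isCut_cutAfter (p : ℕ) : IsCut n y S (cutAfter n y S p) :=
  (Nat.find_spec (exists_isCut_gt n y S p)).2

theorem cutAfter_le (h : p < c) (hc : IsCut n y S c) : cutAfter n y S p ≤ c :=
  Nat.find_min' _ ⟨h, hc⟩

theorem not_isCut_of_lt_of_lt (hp : ¬ IsCut n y S p) (h₁ : cutBefore n y S p < c)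
    (h₂ : c < cutAfter n y S p) : ¬ IsCut n y S c := by
  intro hc
  rcases lt_trichotomy c p with h | rfl | h
  · exact absurd (le_cutBefore hc h) (by omega)
  · exact hp hc
  · exact absurd (cutAfter_le h hc) (by omega)

theorem cutBefore_eq (hc : IsCut n y S c) (hcm : c < m)
    (h : ∀ k, c < k → k < m → ¬ IsCut n y S k) : cutBefore n y S m = c := by
  refine le_antisymm ?_ (le_cutBefore hc hcm)
  by_contra! hlt
  exact h _ hlt (cutBefore_lt (by omega)) (isCut_cutBefore m)

theorem cutAfter_eq (hc : IsCut n y S c) (hmc : m < c)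
    (h : ∀ k, m < k → k < c → ¬ IsCut n y S k) : cutAfter n y S m = c := by
  refine le_antisymm (cutAfter_le hmc hc) ?_
  by_contra! hlt
  exact h _ (lt_cutAfter m) hlt (isCut_cutAfter m)

theorem antitoneOn_piece (hp : ¬ IsCut n y S p) :
    AntitoneOn y (Icc (cutBefore n y S p) (cutAfter n y S p)) := by
  refine antitoneOn_of_add_one_le ordConnected_Icc fun a _ ⟨ha₁, _⟩ ⟨_, ha₂⟩ => ?_
  by_contra! hasc
  have hL := cutBefore_lt_of_not_isCut hp
  have hR : p < cutAfter n y S p := lt_cutAfter p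
  rcases ha₁.eq_or_lt with h | h
  · exact not_isCut_of_lt_of_lt hp (by omega) (by omega) (isCut_succ_of_lt_succ hasc)
  · exact not_isCut_of_lt_of_lt hp h (by omega) (isCut_of_lt_succ hasc)

theorem flipPieces_of_isCut (h : IsCut n y S p) : flipPieces n y S p = y p := if_pos h

theorem flipPieces_of_not_isCut (h : ¬ IsCut n y S p) :
    flipPieces n y S p = y (cutBefore n y S p) + y (cutAfter n y S p)
      - y (cutBefore n y S p + cutAfter n y S p - p) :=
  if_neg h

theorem flipPieces_of_mem_Icc (hp : ¬ IsCut n y S p) (h₁ : cutBefore n y S p ≤ u)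
    (h₂ : u ≤ cutAfter n y S p) :
    flipPieces n y S u = y (cutBefore n y S p) + y (cutAfter n y S p)
      - y (cutBefore n y S p + cutAfter n y S p - u) := by
  rcases h₁.eq_or_lt with rfl | h₁
  · rw [flipPieces_of_isCut (isCut_cutBefore p), Nat.add_sub_cancel_left, Nat.add_sub_cancel]
  rcases h₂.eq_or_lt with rfl | h₂
  · rw [flipPieces_of_isCut (isCut_cutAfter p), Nat.add_sub_cancel, Nat.add_sub_cancel_left]
  have hu := not_isCut_of_lt_of_lt hp h₁ h₂
  rw [flipPieces_of_not_isCut hu,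
    cutBefore_eq (isCut_cutBefore p) h₁ fun k hk _ => not_isCut_of_lt_of_lt hp hk (by omega),
    cutAfter_eq (isCut_cutAfter p) h₂ fun k _ hk => not_isCut_of_lt_of_lt hp (by omega) hk]

theorem antitoneOn_flipPieces (hp : ¬ IsCut n y S p) :
    AntitoneOn (flipPieces n y S) (Icc (cutBefore n y S p) (cutAfter n y S p)) := by
  intro u ⟨hu₁, hu₂⟩ v ⟨hv₁, hv₂⟩ huv
  rw [flipPieces_of_mem_Icc hp hu₁ hu₂, flipPieces_of_mem_Icc hp hv₁ hv₂]
  exact Nat.sub_le_sub_left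
    (antitoneOn_piece hp ⟨by omega, by omega⟩ ⟨by omega, by omega⟩ (by omega)) _

theorem flipPieces_le_self (hy : ∀ q, y q ≤ q) (p : ℕ) : flipPieces n y S p ≤ p := by
  by_cases hp : IsCut n y S p
  · rw [flipPieces_of_isCut hp]
    exact hy p
  have hL := cutBefore_lt_of_not_isCut hp
  have hR : p < cutAfter n y S p := lt_cutAfter p
  have hle := antitoneOn_flipPieces hp ⟨le_rfl, by omega⟩ ⟨hL.le, hR.le⟩ hL.le
  rw [flipPieces_of_isCut (isCut_cutBefore p)] at hle
  have := hy (cutBefore n y S p)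
  omega

theorem exists_piece_of_not_isCut_and (h : ¬ (IsCut n y S t ∧ IsCut n y S (t + 1))) :
    ∃ p, ¬ IsCut n y S p ∧ cutBefore n y S p ≤ t ∧ t + 1 ≤ cutAfter n y S p := by
  by_cases ht : IsCut n y S t
  · exact ⟨t + 1, fun h' => h ⟨ht, h'⟩, Nat.le_of_lt_succ (cutBefore_lt t.succ_ne_zero),
      (lt_cutAfter _).le⟩
  · exact ⟨t, ht, (cutBefore_lt_of_not_isCut ht).le, lt_cutAfter _⟩

theorem flipPieces_lt_succ_iff (t : ℕ) :
    flipPieces n y S t < flipPieces n y S (t + 1) ↔ y t < y (t + 1) := by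
  by_cases h : IsCut n y S t ∧ IsCut n y S (t + 1)
  · rw [flipPieces_of_isCut h.1, flipPieces_of_isCut h.2]
  obtain ⟨p, hp, h₁, h₂⟩ := exists_piece_of_not_isCut_and h
  have ht : t ∈ Icc (cutBefore n y S p) (cutAfter n y S p) := ⟨h₁, by omega⟩
  have ht' : t + 1 ∈ Icc (cutBefore n y S p) (cutAfter n y S p) := ⟨by omega, h₂⟩
  exact iff_of_false (not_lt.2 (antitoneOn_flipPieces hp ht ht' t.le_succ))
    (not_lt.2 (antitoneOn_piece hp ht ht' t.le_succ))

theorem isCut_flipPieces_iff : IsCut n (flipPieces n y S) S p ↔ IsCut n y S p := by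
  cases p with
  | zero => exact iff_of_true (Or.inl rfl) (Or.inl rfl)
  | succ t => simp only [IsCut, Nat.add_sub_cancel, flipPieces_lt_succ_iff]

theorem cutBefore_flipPieces : cutBefore n (flipPieces n y S) S = cutBefore n y S := by
  have h : IsCut n (flipPieces n y S) S = IsCut n y S :=
    funext fun _ => propext isCut_flipPieces_iff
  funext p
  simp only [cutBefore, h]

theorem cutAfter_flipPieces : cutAfter n (flipPieces n y S) S = cutAfter n y S := by
  funext p
  exact Nat.find_congr' (and_congr_right' isCut_flipPieces_iff)

theorem flipPieces_flipPieces : flipPieces n (flipPieces n y S) S = y := by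
  funext p
  by_cases hp : IsCut n y S p
  · rw [flipPieces_of_isCut (isCut_flipPieces_iff.2 hp), flipPieces_of_isCut hp]
  have hL := cutBefore_lt_of_not_isCut hp
  have hR : p < cutAfter n y S p := lt_cutAfter p
  rw [flipPieces_of_not_isCut (mt isCut_flipPieces_iff.1 hp), cutBefore_flipPieces,
    cutAfter_flipPieces, flipPieces_of_isCut (isCut_cutBefore p),
    flipPieces_of_isCut (isCut_cutAfter p), flipPieces_of_mem_Icc hp (by omega) (by omega),
    Nat.sub_sub_self (by omega : p ≤ cutBefore n y S p + cutAfter n y S p)]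
  have := antitoneOn_piece hp ⟨le_rfl, by omega⟩ ⟨hL.le, hR.le⟩ hL.le
  omega

end Pieces

section Patterns

abbrev Pattern := ℕ → ℕ → ℕ → ℕ → Prop

def Occurs (P : Pattern) (y : ℕ → ℕ) (i : ℕ) : Prop :=
  P (y i) (y (i + 1)) (y (i + 2)) (y (i + 3))

def occurrences (P : Pattern) (n : ℕ) (y : ℕ → ℕ) : Set ℕ := {i | i + 3 < n ∧ Occurs P y i}

structure NonOverlappingDescent (P : Pattern) : Prop where
  antitone : ∀ {a b c d}, P a b c d → b ≤ a ∧ c ≤ b ∧ d ≤ c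
  not_shift_one : ∀ {a b c d e}, P a b c d → ¬ P b c d e
  not_shift_two : ∀ {a b c d e f}, P a b c d → ¬ P c d e f

def IsRevCompl (P Q : Pattern) : Prop :=
  ∀ C a b c d, a ≤ C → b ≤ C → c ≤ C → d ≤ C → (P a b c d ↔ Q (C - d) (C - c) (C - b) (C - a))

variable {P Q : Pattern} {n : ℕ} {y : ℕ → ℕ} {S : Set ℕ} {p q : ℕ}

theorem IsRevCompl.symm (h : IsRevCompl P Q) : IsRevCompl Q P := by
  intro C a b c d ha hb hc hd
  have := h C (C - d) (C - c) (C - b) (C - a) (Nat.sub_le _ _) (Nat.sub_le _ _) (Nat.sub_le _ _)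
    (Nat.sub_le _ _)
  rwa [Nat.sub_sub_self ha, Nat.sub_sub_self hb, Nat.sub_sub_self hc, Nat.sub_sub_self hd,
    Iff.comm] at this

theorem not_isCut_of_occurs (hP : NonOverlappingDescent P) (hS : ∀ s ∈ S, Occurs P y s)
    (hp : Occurs P y p) (hpn : p + 3 < n) :
    ¬ IsCut n y S (p + 1) ∧ ¬ IsCut n y S (p + 2) := by
  obtain ⟨h₁, h₂, h₃⟩ := hP.antitone hp
  constructor
  · rintro (h | h | h | h | h | ⟨hp3, h⟩)
    · omega
    · omega
    · simp only [Nat.add_sub_cancel] at h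
      omega
    · exact absurd h (not_lt.2 h₂)
    · exact hP.not_shift_one hp (hS _ h)
    · obtain ⟨r, rfl⟩ : ∃ r, p = r + 2 := ⟨p - 2, by omega⟩
      exact hP.not_shift_two (hS _ (by simpa using h)) hp
  · rintro (h | h | h | h | h | ⟨hp3, h⟩)
    · omega
    · omega
    · exact absurd h (not_lt.2 h₂)
    · exact absurd h (not_lt.2 h₃)
    · exact hP.not_shift_two hp (hS _ h)
    · obtain ⟨r, rfl⟩ : ∃ r, p = r + 1 := ⟨p - 1, by omega⟩
      exact hP.not_shift_one (hS _ (by simpa using h)) hp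

theorem occurs_flipPieces_iff (hPQ : IsRevCompl P Q) {m : ℕ} (hm : ¬ IsCut n y S m)
    (hL : cutBefore n y S m ≤ p) (hR : p + 3 ≤ cutAfter n y S m) :
    Occurs Q (flipPieces n y S) p ↔
      Occurs P y (cutBefore n y S m + cutAfter n y S m - (p + 3)) := by
  set L := cutBefore n y S m
  set R := cutAfter n y S m
  obtain ⟨s, hs⟩ : ∃ s, L + R - (p + 3) = s := ⟨_, rfl⟩
  have e₀ : flipPieces n y S p = y L + y R - y (s + 3) := by
    rw [flipPieces_of_mem_Icc hm hL (by omega), show L + R - p = s + 3 by omega]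
  have e₁ : flipPieces n y S (p + 1) = y L + y R - y (s + 2) := by
    rw [flipPieces_of_mem_Icc hm (by omega) (by omega), show L + R - (p + 1) = s + 2 by omega]
  have e₂ : flipPieces n y S (p + 2) = y L + y R - y (s + 1) := by
    rw [flipPieces_of_mem_Icc hm (by omega) (by omega), show L + R - (p + 2) = s + 1 by omega]
  have e₃ : flipPieces n y S (p + 3) = y L + y R - y s := by
    rw [flipPieces_of_mem_Icc hm (by omega) hR, show L + R - (p + 3) = s by omega]
  have bound : ∀ u, s ≤ u → u ≤ s + 3 → y u ≤ y L + y R := fun u h₁ h₂ =>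
    (antitoneOn_piece hm ⟨le_rfl, by omega⟩ ⟨by omega, by omega⟩ (by omega)).trans
      (Nat.le_add_right _ _)
  rw [hs, Occurs, Occurs, e₀, e₁, e₂, e₃]
  exact (hPQ _ _ _ _ _ (bound s le_rfl (by omega)) (bound (s + 1) (by omega) (by omega))
    (bound (s + 2) (by omega) (by omega)) (bound (s + 3) (by omega) le_rfl)).symm

theorem occurs_flipPieces_of_mem (hP : NonOverlappingDescent P) (hPQ : IsRevCompl P Q)
    (hq : q ∈ occurrences P n y) : Occurs Q (flipPieces n y (occurrences P n y)) q := by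
  obtain ⟨h₁, h₂⟩ :=
    not_isCut_of_occurs (S := occurrences P n y) hP (fun _ hs => hs.2) hq.2 hq.1
  have hL : cutBefore n y (occurrences P n y) (q + 1) = q :=
    cutBefore_eq (isCut_of_mem hq) (by omega) fun k hk hk' => by omega
  have hR : cutAfter n y (occurrences P n y) (q + 1) = q + 3 :=
    cutAfter_eq (isCut_add_three_of_mem hq) (by omega) fun k hk hk' => by
      obtain rfl : k = q + 2 := by omega
      exact h₂
  refine (occurs_flipPieces_iff hPQ h₁ hL.le hR.ge).2 ?_
  rw [hL, hR, Nat.add_sub_cancel]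
  exact hq.2

theorem eq_or_eq_of_isCut {m c : ℕ} (hm : ¬ IsCut n y S m) (hc : IsCut n y S c)
    (h₁ : cutBefore n y S m ≤ c) (h₂ : c ≤ cutAfter n y S m) :
    c = cutBefore n y S m ∨ c = cutAfter n y S m := by
  by_contra! h
  exact not_isCut_of_lt_of_lt hm (lt_of_le_of_ne h₁ h.1.symm) (lt_of_le_of_ne h₂ h.2) hc

theorem mem_of_occurs_flipPieces (hQ : NonOverlappingDescent Q) (hPQ : IsRevCompl P Q)
    (hS : ∀ s ∈ S, Occurs Q (flipPieces n y S) s) (hSP : ∀ s, s + 3 < n → Occurs P y s → s ∈ S)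
    (hpn : p + 3 < n) (hp : Occurs Q (flipPieces n y S) p) : p ∈ S := by
  obtain ⟨h₁, h₂⟩ := not_isCut_of_occurs hQ hS hp hpn
  rw [isCut_flipPieces_iff] at h₁ h₂
  have hL : cutBefore n y S (p + 1) ≤ p := Nat.le_of_lt_succ (cutBefore_lt_of_not_isCut h₁)
  have hR : p + 3 ≤ cutAfter n y S (p + 1) := by
    have : p + 1 < cutAfter n y S (p + 1) := lt_cutAfter _
    by_contra! h
    exact h₂ ((show cutAfter n y S (p + 1) = p + 2 by omega) ▸ isCut_cutAfter (p + 1))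
  have hRn : cutAfter n y S (p + 1) ≤ n - 1 := cutAfter_le (by omega) (isCut_of_le (by omega))
  have hocc := (occurs_flipPieces_iff hPQ h₁ hL hR).1 hp
  obtain ⟨s, hsdef⟩ : ∃ s, cutBefore n y S (p + 1) + cutAfter n y S (p + 1) - (p + 3) = s :=
    ⟨_, rfl⟩
  rw [hsdef] at hocc
  have hs : s ∈ S := hSP s (by omega) hocc
  -- an occurrence is cut at both ends, so one lying inside a piece must fill all of it
  have hsp : s = p := by
    rcases eq_or_eq_of_isCut h₁ (isCut_of_mem hs) (by omega) (by omega) with h | h <;>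
    rcases eq_or_eq_of_isCut h₁ (isCut_add_three_of_mem hs) (by omega) (by omega) with h' | h' <;>
    omega
  exact hsp ▸ hs

theorem occurrences_flipPieces (hP : NonOverlappingDescent P) (hQ : NonOverlappingDescent Q)
    (hPQ : IsRevCompl P Q) :
    occurrences Q n (flipPieces n y (occurrences P n y)) = occurrences P n y := by
  ext p
  exact ⟨fun hp => mem_of_occurs_flipPieces hQ hPQ
      (fun _ hs => occurs_flipPieces_of_mem hP hPQ hs) (fun _ hs hocc => ⟨hs, hocc⟩) hp.1 hp.2,
    fun hp => ⟨hp.1, occurs_flipPieces_of_mem hP hPQ hp⟩⟩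

end Patterns

section InversionSequences

variable {P Q : Pattern} {n : ℕ}

theorem ev_le (e : InvSeq n) (p : ℕ) : ev e p ≤ p := by
  unfold ev
  split_ifs with h
  · exact Nat.le_of_lt_succ (e ⟨p, h⟩).isLt
  · exact Nat.zero_le p

theorem ev_injective : Function.Injective (ev : InvSeq n → ℕ → ℕ) := by
  intro e e' h
  funext i
  ext
  simpa [ev] using congrFun h i

noncomputable def flipInvSeq (P : Pattern) (e : InvSeq n) : InvSeq n := fun i =>
  ⟨flipPieces n (ev e) (occurrences P n (ev e)) i,
    Nat.lt_succ_of_le (flipPieces_le_self (ev_le e) i)⟩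

theorem ev_flipInvSeq (e : InvSeq n) :
    ev (flipInvSeq P e) = flipPieces n (ev e) (occurrences P n (ev e)) := by
  funext p
  by_cases h : p < n
  · simp [ev, h, flipInvSeq]
  · rw [flipPieces_of_isCut (isCut_of_le (by omega))]
    simp [ev, h]

theorem occurrences_ev_flipInvSeq (hP : NonOverlappingDescent P) (hQ : NonOverlappingDescent Q)
    (hPQ : IsRevCompl P Q) (e : InvSeq n) :
    occurrences Q n (ev (flipInvSeq P e)) = occurrences P n (ev e) := by
  rw [ev_flipInvSeq, occurrences_flipPieces hP hQ hPQ]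

theorem flipInvSeq_flipInvSeq (hP : NonOverlappingDescent P) (hQ : NonOverlappingDescent Q)
    (hPQ : IsRevCompl P Q) (e : InvSeq n) : flipInvSeq Q (flipInvSeq P e) = e :=
  ev_injective (by rw [ev_flipInvSeq, occurrences_ev_flipInvSeq hP hQ hPQ, ev_flipInvSeq,
    flipPieces_flipPieces])

theorem card_occurrences_eq (hP : NonOverlappingDescent P) (hQ : NonOverlappingDescent Q)
    (hPQ : IsRevCompl P Q) (n : ℕ) (T : Set ℕ) :
    Nat.card {e : InvSeq n // occurrences P n (ev e) = T} =
      Nat.card {e : InvSeq n // occurrences Q n (ev e) = T} := by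
  let φ : InvSeq n ≃ InvSeq n :=
    ⟨flipInvSeq P, flipInvSeq Q, flipInvSeq_flipInvSeq hP hQ hPQ,
      flipInvSeq_flipInvSeq hQ hP hPQ.symm⟩
  exact Nat.card_congr (φ.subtypeEquiv fun e => by
    rw [show φ e = flipInvSeq P e from rfl, occurrences_ev_flipInvSeq hP hQ hPQ])

end InversionSequences

def pattern2100 : Pattern := fun a b c d => b < a ∧ c < b ∧ c = d

def pattern2210 : Pattern := fun a b c d => a = b ∧ c < b ∧ d < c

theorem nonOverlappingDescent_pattern2100 : NonOverlappingDescent pattern2100 where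
  antitone h := by simp only [pattern2100] at h; omega
  not_shift_one h h' := by simp only [pattern2100] at h h'; omega
  not_shift_two h h' := by simp only [pattern2100] at h h'; omega

theorem nonOverlappingDescent_pattern2210 : NonOverlappingDescent pattern2210 where
  antitone h := by simp only [pattern2210] at h; omega
  not_shift_one h h' := by simp only [pattern2210] at h h'; omega
  not_shift_two h h' := by simp only [pattern2210] at h h'; omega

theorem isRevCompl_pattern2100_pattern2210 : IsRevCompl pattern2100 pattern2210 := by
  intro C a b c d ha hb hc hd
  simp only [pattern2100, pattern2210]
  omega

end SuperStrongWilf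

/-- Super strong Wilf equivalence of 2100 and 2210. -/
theorem superStrongWilf_2100_2210 (n : ℕ) (T : Set ℕ) :
    Nat.card {e : InvSeq n // Em2100 e = T} = Nat.card {e : InvSeq n // Em2210 e = T} :=
  SuperStrongWilf.card_occurrences_eq SuperStrongWilf.nonOverlappingDescent_pattern2100
    SuperStrongWilf.nonOverlappingDescent_pattern2210
    SuperStrongWilf.isRevCompl_pattern2100_pattern2210 n T
end

section
/- The consecutive patterns 0102 and 0112 are reciprocal: for all n and all pairs of subsets S, T of [n], the number of inversion sequences e of length n with Em(0102, e) = S and Em(0112, e) = T equals the number of inversion sequences e of length n with Em(0102, e) = T and Em(0112, e) = S. -/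
/-- Positions of occurrences of the consecutive pattern 0102
(`e i = e (i+2)` and `e i < e (i+1) < e (i+3)`). -/
def Em0102 {n : ℕ} (e : InvSeq n) : Set ℕ :=
  {i | i + 3 < n ∧ ev e i = ev e (i+2) ∧ ev e i < ev e (i+1) ∧ ev e (i+1) < ev e (i+3)}

/-- Positions of occurrences of the consecutive pattern 0112
(`e i < e (i+1) = e (i+2) < e (i+3)`). -/
def Em0112 {n : ℕ} (e : InvSeq n) : Set ℕ :=
  {i | i + 3 < n ∧ ev e i < ev e (i+1) ∧ ev e (i+1) = ev e (i+2) ∧ ev e (i+2) < ev e (i+3)}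

namespace Recip

lemma ev_le {n : ℕ} (e : InvSeq n) (m : ℕ) : ev e m ≤ m := by
  unfold ev
  split
  · exact Nat.lt_succ_iff.mp (e ⟨m, by assumption⟩).isLt
  · exact Nat.zero_le m

lemma no_adj {n : ℕ} (e : InvSeq n) (j : ℕ)
    (h1 : j ∈ Em0102 e ∨ j ∈ Em0112 e)
    (h2 : j + 1 ∈ Em0102 e ∨ j + 1 ∈ Em0112 e) : False := by
  simp only [Em0102, Em0112, Set.mem_setOf_eq] at h1 h2
  have r1 : j + 1 + 1 = j + 2 := rfl
  have r2 : j + 1 + 2 = j + 3 := rfl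
  have r3 : j + 1 + 3 = j + 4 := rfl
  rw [r1, r2, r3] at h2
  omega

open Classical in
noncomputable def pv (S T : Set ℕ) (g : ℕ → ℕ) (k : ℕ) : ℕ :=
  if h : 2 ≤ k then
    if k - 2 ∈ S then g (k - 1)
    else if k - 2 ∈ T then pv S T g (k - 2)
    else g k
  else g k
  termination_by k
  decreasing_by omega

lemma pv_le (S T : Set ℕ) (g : ℕ → ℕ) (hg : ∀ m, g m ≤ m) : ∀ k, pv S T g k ≤ k := by
  intro k
  induction k using Nat.strong_induction_on with
  | _ k ih =>
    rw [pv]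
    split
    · split
      · exact le_trans (hg _) (by omega)
      · split
        · exact le_trans (ih (k - 2) (by omega)) (by omega)
        · exact hg k
    · exact hg k

noncomputable def phi (S T : Set ℕ) {n : ℕ} (e : InvSeq n) : InvSeq n :=
  fun i => ⟨pv S T (ev e) i.val, Nat.lt_succ_of_le (pv_le S T (ev e) (ev_le e) i.val)⟩

lemma ev_phi (S T : Set ℕ) {n : ℕ} (e : InvSeq n) (k : ℕ) (hk : k < n) :
    ev (phi S T e) k = pv S T (ev e) k := by
  unfold ev phi
  rw [dif_pos hk]
  rfl


section Core

variable {n : ℕ} (e : InvSeq n) (S T : Set ℕ)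

lemma chain (hS : ∀ j ∈ S, j ∈ Em0102 e) (hT : ∀ j ∈ T, j ∈ Em0112 e) :
    ∀ k ∈ T, pv S T (ev e) k < ev e (k + 2) := by
  intro k
  induction k using Nat.strong_induction_on with
  | _ k ih =>
    intro hk
    obtain ⟨hkn, b1, b2, b3⟩ := hT k hk
    rw [pv]
    split
    · rename_i h2k
      split
      · rename_i hmS
        obtain ⟨cn, c1, c2, c3⟩ := hS _ hmS
        have e1 : k - 2 + 1 = k - 1 := by omega
        have e2 : k - 2 + 2 = k := by omega
        have e3 : k - 2 + 3 = k + 1 := by omega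
        simp only [e1, e2, e3] at c1 c2 c3
        omega
      · split
        · rename_i hmT
          have := ih (k - 2) (by omega) hmT
          have e2 : k - 2 + 2 = k := by omega
          simp only [e2] at this
          omega
        · omega
    · omega

lemma head_lt (hS : ∀ j ∈ S, j ∈ Em0102 e) (hT : ∀ j ∈ T, j ∈ Em0112 e)
    {k : ℕ} (hk : k ∈ S) : pv S T (ev e) k < ev e (k + 1) := by
  obtain ⟨hkn, c1, c2, c3⟩ := hS k hk
  rw [pv]
  split
  · rename_i h2k
    split
    · rename_i hmS
      obtain ⟨dn, d1, d2, d3⟩ := hS _ hmS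
      have e1 : k - 2 + 1 = k - 1 := by omega
      have e3 : k - 2 + 3 = k + 1 := by omega
      simp only [e1, e3] at d3
      omega
    · split
      · rename_i hmT
        have := chain e S T hS hT (k - 2) hmT
        have e2 : k - 2 + 2 = k := by omega
        simp only [e2] at this
        omega
      · omega
  · omega

lemma pv_eq (g : ℕ → ℕ) {k : ℕ} (h : k < 2 ∨ (k - 2 ∉ S ∧ k - 2 ∉ T)) :
    pv S T g k = g k := by
  rcases h with h | ⟨h1, h2⟩
  · rw [pv, dif_neg (by omega)]
  · by_cases hk2 : 2 ≤ k
    · rw [pv, dif_pos hk2, if_neg h1, if_neg h2]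
    · rw [pv, dif_neg hk2]

lemma not_occ_pred (hS : ∀ j ∈ S, j ∈ Em0102 e) (hT : ∀ j ∈ T, j ∈ Em0112 e)
    {i : ℕ} (hi : i ∈ S ∪ T) (h1 : 1 ≤ i) : i - 1 ∉ S ∧ i - 1 ∉ T := by
  have hocc : i ∈ Em0102 e ∨ i ∈ Em0112 e := by
    rcases hi with h | h
    · exact Or.inl (hS _ h)
    · exact Or.inr (hT _ h)
  constructor <;> intro hmem
  · exact no_adj e (i - 1) (Or.inl (hS _ hmem)) (by rwa [show i - 1 + 1 = i by omega])
  · exact no_adj e (i - 1) (Or.inr (hT _ hmem)) (by rwa [show i - 1 + 1 = i by omega])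

lemma not_occ_succ (hS : ∀ j ∈ S, j ∈ Em0102 e) (hT : ∀ j ∈ T, j ∈ Em0112 e)
    {i : ℕ} (hi : i ∈ S ∪ T) : i + 1 ∉ S ∧ i + 1 ∉ T := by
  have hocc : i ∈ Em0102 e ∨ i ∈ Em0112 e := by
    rcases hi with h | h
    · exact Or.inl (hS _ h)
    · exact Or.inr (hT _ h)
  constructor <;> intro hmem
  · exact no_adj e i hocc (Or.inl (hS _ hmem))
  · exact no_adj e i hocc (Or.inr (hT _ hmem))

lemma pv_succ_eq (hS : ∀ j ∈ S, j ∈ Em0102 e) (hT : ∀ j ∈ T, j ∈ Em0112 e)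
    {i : ℕ} (hi : i ∈ S ∪ T) : pv S T (ev e) (i + 1) = ev e (i + 1) := by
  apply pv_eq
  rcases Nat.lt_or_ge (i + 1) 2 with h | h
  · exact Or.inl h
  · right
    have := not_occ_pred e S T hS hT hi (by omega)
    rw [show i + 1 - 2 = i - 1 by omega]
    exact this

lemma pv_add3_eq (hS : ∀ j ∈ S, j ∈ Em0102 e) (hT : ∀ j ∈ T, j ∈ Em0112 e)
    {i : ℕ} (hi : i ∈ S ∪ T) : pv S T (ev e) (i + 3) = ev e (i + 3) := by
  apply pv_eq
  right
  rw [show i + 3 - 2 = i + 1 by omega]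
  exact not_occ_succ e S T hS hT hi

lemma mem_phi_0112 (hS : ∀ j ∈ S, j ∈ Em0102 e) (hT : ∀ j ∈ T, j ∈ Em0112 e)
    {i : ℕ} (hi : i ∈ S) : i ∈ Em0112 (phi S T e) := by
  obtain ⟨hn, c1, c2, c3⟩ := hS i hi
  have hP1 : pv S T (ev e) (i + 1) = ev e (i + 1) :=
    pv_succ_eq e S T hS hT (Or.inl hi)
  have hP3 : pv S T (ev e) (i + 3) = ev e (i + 3) :=
    pv_add3_eq e S T hS hT (Or.inl hi)
  have hP2 : pv S T (ev e) (i + 2) = ev e (i + 1) := by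
    rw [pv, dif_pos (by omega : 2 ≤ i + 2), show i + 2 - 2 = i by omega,
      show i + 2 - 1 = i + 1 by omega, if_pos hi]
  have hP0 : pv S T (ev e) i < ev e (i + 1) := head_lt e S T hS hT hi
  refine ⟨hn, ?_, ?_, ?_⟩ <;>
    rw [ev_phi S T e _ (by omega), ev_phi S T e _ (by omega)]
  · omega
  · omega
  · omega

lemma mem_phi_0102 (hS : ∀ j ∈ S, j ∈ Em0102 e) (hT : ∀ j ∈ T, j ∈ Em0112 e)
    {i : ℕ} (hi : i ∈ T) : i ∈ Em0102 (phi S T e) := by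
  obtain ⟨hn, b1, b2, b3⟩ := hT i hi
  have hiS : i ∉ S := by
    intro hmem
    obtain ⟨_, c1, c2, _⟩ := hS i hmem
    omega
  have hP1 : pv S T (ev e) (i + 1) = ev e (i + 1) :=
    pv_succ_eq e S T hS hT (Or.inr hi)
  have hP3 : pv S T (ev e) (i + 3) = ev e (i + 3) :=
    pv_add3_eq e S T hS hT (Or.inr hi)
  have hP2 : pv S T (ev e) (i + 2) = pv S T (ev e) i := by
    rw [pv, dif_pos (by omega : 2 ≤ i + 2), show i + 2 - 2 = i by omega,
      if_neg hiS, if_pos hi]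
  have hP0 : pv S T (ev e) i < ev e (i + 2) := chain e S T hS hT i hi
  refine ⟨hn, ?_, ?_, ?_⟩ <;>
    rw [ev_phi S T e _ (by omega), ev_phi S T e _ (by omega)]
  · omega
  · omega
  · omega

lemma pv_invol (hS : ∀ j ∈ S, j ∈ Em0102 e) (hT : ∀ j ∈ T, j ∈ Em0112 e) :
    ∀ i, i < n → pv T S (ev (phi S T e)) i = ev e i := by
  intro i
  induction i using Nat.strong_induction_on with
  | _ i ih =>
    intro hin
    rw [pv]
    split
    · rename_i h2i
      split
      · rename_i hmT
        obtain ⟨_, b1, b2, b3⟩ := hT _ hmT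
        have e1 : i - 2 + 1 = i - 1 := by omega
        have e2 : i - 2 + 2 = i := by omega
        simp only [e1, e2] at b2
        rw [ev_phi S T e _ (by omega)]
        rw [pv_eq S T (ev e) (k := i - 1) ?side]
        · exact b2
        case side =>
          rcases Nat.lt_or_ge (i - 1) 2 with h | h
          · exact Or.inl h
          · right
            have := not_occ_pred e S T hS hT (Or.inr hmT) (by omega)
            rw [show i - 1 - 2 = i - 2 - 1 by omega]
            exact this
      · split
        · rename_i hmS
          obtain ⟨_, c1, c2, c3⟩ := hS _ hmS
          have e2 : i - 2 + 2 = i := by omega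
          simp only [e2] at c1
          rw [ih (i - 2) (by omega) (by omega)]
          omega
        · rename_i hmS hmT
          rw [ev_phi S T e _ hin]
          exact pv_eq S T (ev e) (Or.inr ⟨hmT, hmS⟩)
    · rename_i h2i
      rw [ev_phi S T e _ hin]
      exact pv_eq S T (ev e) (Or.inl (by omega))

lemma phi_phi (hS : ∀ j ∈ S, j ∈ Em0102 e) (hT : ∀ j ∈ T, j ∈ Em0112 e) :
    phi T S (phi S T e) = e := by
  funext i
  apply Fin.ext
  show pv T S (ev (phi S T e)) i.val = _
  rw [pv_invol e S T hS hT i.val i.isLt]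
  unfold ev
  rw [dif_pos i.isLt]

end Core


section Count

variable (n : ℕ)

open Classical in
noncomputable def occA (e : InvSeq n) : Finset ℕ :=
  (Finset.range n).filter (fun i => i ∈ Em0102 e)

open Classical in
noncomputable def occB (e : InvSeq n) : Finset ℕ :=
  (Finset.range n).filter (fun i => i ∈ Em0112 e)

lemma mem_occA {e : InvSeq n} {i : ℕ} : i ∈ occA n e ↔ i ∈ Em0102 e := by
  classical
  simp only [occA, Finset.mem_filter, Finset.mem_range]
  constructor
  · rintro ⟨-, h⟩; exact h
  · intro h; exact ⟨by have := h.1; omega, h⟩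

lemma mem_occB {e : InvSeq n} {i : ℕ} : i ∈ occB n e ↔ i ∈ Em0112 e := by
  classical
  simp only [occB, Finset.mem_filter, Finset.mem_range]
  constructor
  · rintro ⟨-, h⟩; exact h
  · intro h; exact ⟨by have := h.1; omega, h⟩

lemma coe_occA (e : InvSeq n) : (occA n e : Set ℕ) = Em0102 e :=
  Set.ext fun _ => mem_occA n

lemma coe_occB (e : InvSeq n) : (occB n e : Set ℕ) = Em0112 e :=
  Set.ext fun _ => mem_occB n

lemma subset_occA_iff (S : Finset ℕ) (e : InvSeq n) :
    S ⊆ occA n e ↔ ∀ j ∈ (S : Set ℕ), j ∈ Em0102 e := by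
  constructor
  · intro h j hj; exact (mem_occA n).mp (h (Finset.mem_coe.mp hj))
  · intro h j hj; exact (mem_occA n).mpr (h j (Finset.mem_coe.mpr hj))

lemma subset_occB_iff (T : Finset ℕ) (e : InvSeq n) :
    T ⊆ occB n e ↔ ∀ j ∈ (T : Set ℕ), j ∈ Em0112 e := by
  constructor
  · intro h j hj; exact (mem_occB n).mp (h (Finset.mem_coe.mp hj))
  · intro h j hj; exact (mem_occB n).mpr (h j (Finset.mem_coe.mpr hj))

open Classical in
noncomputable def NN (S T : Finset ℕ) : ℕ :=
  (Finset.univ.filter (fun e : InvSeq n => occA n e = S ∧ occB n e = T)).card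

open Classical in
noncomputable def MM (S T : Finset ℕ) : ℕ :=
  (Finset.univ.filter (fun e : InvSeq n => S ⊆ occA n e ∧ T ⊆ occB n e)).card

lemma MM_symm (S T : Finset ℕ) : MM n S T = MM n T S := by
  classical
  unfold MM
  apply Finset.card_bij' (fun e _ => phi (↑S) (↑T) e) (fun e _ => phi (↑T) (↑S) e)
  · intro e he
    simp only [Finset.mem_filter, Finset.mem_univ, true_and] at he ⊢
    have hSo := (subset_occA_iff n S e).mp he.1
    have hTo := (subset_occB_iff n T e).mp he.2
    constructor
    · exact (subset_occA_iff n T _).mpr fun j hj => mem_phi_0102 e (↑S) (↑T) hSo hTo hj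
    · exact (subset_occB_iff n S _).mpr fun j hj => mem_phi_0112 e (↑S) (↑T) hSo hTo hj
  · intro e he
    simp only [Finset.mem_filter, Finset.mem_univ, true_and] at he ⊢
    have hSo := (subset_occA_iff n T e).mp he.1
    have hTo := (subset_occB_iff n S e).mp he.2
    constructor
    · exact (subset_occA_iff n S _).mpr fun j hj => mem_phi_0102 e (↑T) (↑S) hSo hTo hj
    · exact (subset_occB_iff n T _).mpr fun j hj => mem_phi_0112 e (↑T) (↑S) hSo hTo hj
  · intro e he
    simp only [Finset.mem_filter, Finset.mem_univ, true_and] at he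
    exact phi_phi e (↑S) (↑T) ((subset_occA_iff n S e).mp he.1) ((subset_occB_iff n T e).mp he.2)
  · intro e he
    simp only [Finset.mem_filter, Finset.mem_univ, true_and] at he
    exact phi_phi e (↑T) (↑S) ((subset_occA_iff n T e).mp he.1) ((subset_occB_iff n S e).mp he.2)

open Classical in
lemma MM_eq_sum (S T : Finset ℕ) :
    MM n S T = ∑ p ∈ (((Finset.range n).powerset ×ˢ (Finset.range n).powerset).filter
      (fun p => S ⊆ p.1 ∧ T ⊆ p.2)), NN n p.1 p.2 := by
  classical
  unfold MM
  rw [Finset.card_eq_sum_card_fiberwise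
    (f := fun e : InvSeq n => (occA n e, occB n e))
    (t := ((Finset.range n).powerset ×ˢ (Finset.range n).powerset).filter
      (fun p => S ⊆ p.1 ∧ T ⊆ p.2)) ?H]
  · apply Finset.sum_congr rfl
    intro p hp
    simp only [Finset.mem_filter, Finset.mem_product, Finset.mem_powerset] at hp
    unfold NN
    congr 1
    apply Finset.ext
    intro e
    simp only [Finset.mem_filter, Finset.mem_univ, true_and, Prod.ext_iff]
    constructor
    · rintro ⟨-, h1, h2⟩; exact ⟨h1, h2⟩
    · rintro ⟨h1, h2⟩
      exact ⟨⟨h1 ▸ hp.2.1, h2 ▸ hp.2.2⟩, h1, h2⟩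
  case H =>
    intro e he
    simp only [Finset.mem_coe, Finset.mem_filter, Finset.mem_univ, true_and] at he
    simp only [Finset.mem_coe, Finset.mem_filter, Finset.mem_product, Finset.mem_powerset]
    refine ⟨⟨?_, ?_⟩, he.1, he.2⟩
    · exact Finset.filter_subset _ _
    · exact Finset.filter_subset _ _

lemma NN_symm_aux : ∀ k : ℕ, ∀ S T : Finset ℕ, S ⊆ Finset.range n → T ⊆ Finset.range n →
    (Finset.range n \ S).card + (Finset.range n \ T).card ≤ k → NN n S T = NN n T S := by
  intro k
  induction k with
  | zero =>
    intro S T hS hT hm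
    have h1 : Finset.range n \ S = ∅ := Finset.card_eq_zero.mp (by omega)
    have h2 : Finset.range n \ T = ∅ := Finset.card_eq_zero.mp (by omega)
    have h1' : S = Finset.range n :=
      Finset.Subset.antisymm hS (Finset.sdiff_eq_empty_iff_subset.mp h1)
    have h2' : T = Finset.range n :=
      Finset.Subset.antisymm hT (Finset.sdiff_eq_empty_iff_subset.mp h2)
    rw [h1', h2']
  | succ k ih =>
    intro S T hS hT hm
    classical
    set t1 := (((Finset.range n).powerset ×ˢ (Finset.range n).powerset).filter
      (fun p => S ⊆ p.1 ∧ T ⊆ p.2)) with ht1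
    set t2 := (((Finset.range n).powerset ×ˢ (Finset.range n).powerset).filter
      (fun p => T ⊆ p.1 ∧ S ⊆ p.2)) with ht2
    have hmem1 : (S, T) ∈ t1 := by
      simp only [ht1, Finset.mem_filter, Finset.mem_product, Finset.mem_powerset]
      exact ⟨⟨hS, hT⟩, Finset.Subset.refl _, Finset.Subset.refl _⟩
    have hmem2 : (T, S) ∈ t2 := by
      simp only [ht2, Finset.mem_filter, Finset.mem_product, Finset.mem_powerset]
      exact ⟨⟨hT, hS⟩, Finset.Subset.refl _, Finset.Subset.refl _⟩
    have key1 : NN n S T + ∑ p ∈ t1.erase (S, T), NN n p.1 p.2 = MM n S T := by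
      rw [MM_eq_sum]
      exact Finset.add_sum_erase t1 (fun p => NN n p.1 p.2) hmem1
    have key2 : NN n T S + ∑ p ∈ t2.erase (T, S), NN n p.1 p.2 = MM n T S := by
      rw [MM_eq_sum]
      exact Finset.add_sum_erase t2 (fun p => NN n p.1 p.2) hmem2
    have hstep : ∀ p ∈ t1.erase (S, T), NN n p.1 p.2 = NN n p.2 p.1 := by
      intro p hp
      rw [Finset.mem_erase] at hp
      obtain ⟨hne, hp⟩ := hp
      simp only [ht1, Finset.mem_filter, Finset.mem_product, Finset.mem_powerset] at hp
      obtain ⟨⟨hp1, hp2⟩, hsp1, hsp2⟩ := hp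
      apply ih p.1 p.2 hp1 hp2
      have c1 : Finset.range n \ p.1 ⊆ Finset.range n \ S :=
        Finset.sdiff_subset_sdiff (Finset.Subset.refl _) hsp1
      have c2 : Finset.range n \ p.2 ⊆ Finset.range n \ T :=
        Finset.sdiff_subset_sdiff (Finset.Subset.refl _) hsp2
      have d1 := Finset.card_le_card c1
      have d2 := Finset.card_le_card c2
      have hne' : S ≠ p.1 ∨ T ≠ p.2 := by
        by_contra hcon
        push_neg at hcon
        exact hne (Prod.ext hcon.1.symm hcon.2.symm)
      have hstrict : (Finset.range n \ p.1).card < (Finset.range n \ S).card ∨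
          (Finset.range n \ p.2).card < (Finset.range n \ T).card := by
        have e1 : (Finset.range n \ S).card = (Finset.range n).card - S.card :=
          Finset.card_sdiff_of_subset hS
        have e2 : (Finset.range n \ T).card = (Finset.range n).card - T.card :=
          Finset.card_sdiff_of_subset hT
        have e3 : (Finset.range n \ p.1).card = (Finset.range n).card - p.1.card :=
          Finset.card_sdiff_of_subset hp1
        have e4 : (Finset.range n \ p.2).card = (Finset.range n).card - p.2.card :=
          Finset.card_sdiff_of_subset hp2
        have f1 := Finset.card_le_card hp1
        have f2 := Finset.card_le_card hp2
        rcases hne' with h | h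
        · left
          have : S.card < p.1.card := Finset.card_lt_card (ssubset_of_subset_of_ne hsp1 h)
          omega
        · right
          have : T.card < p.2.card := Finset.card_lt_card (ssubset_of_subset_of_ne hsp2 h)
          omega
      omega
    have hswap : ∑ p ∈ t1.erase (S, T), NN n p.2 p.1 = ∑ p ∈ t2.erase (T, S), NN n p.1 p.2 := by
      apply Finset.sum_nbij' (i := fun p => (p.2, p.1)) (j := fun p => (p.2, p.1))
      · intro p hp
        rw [Finset.mem_erase] at hp ⊢
        obtain ⟨hne, hp⟩ := hp
        simp only [ht1, Finset.mem_filter, Finset.mem_product, Finset.mem_powerset] at hp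
        refine ⟨?_, ?_⟩
        · intro hcon
          apply hne
          have := congrArg Prod.fst hcon
          have := congrArg Prod.snd hcon
          exact Prod.ext (by simpa using congrArg Prod.snd hcon) (by simpa using congrArg Prod.fst hcon)
        · simp only [ht2, Finset.mem_filter, Finset.mem_product, Finset.mem_powerset]
          exact ⟨⟨hp.1.2, hp.1.1⟩, hp.2.2, hp.2.1⟩
      · intro p hp
        rw [Finset.mem_erase] at hp ⊢
        obtain ⟨hne, hp⟩ := hp
        simp only [ht2, Finset.mem_filter, Finset.mem_product, Finset.mem_powerset] at hp
        refine ⟨?_, ?_⟩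
        · intro hcon
          apply hne
          exact Prod.ext (by simpa using congrArg Prod.snd hcon) (by simpa using congrArg Prod.fst hcon)
        · simp only [ht1, Finset.mem_filter, Finset.mem_product, Finset.mem_powerset]
          exact ⟨⟨hp.1.2, hp.1.1⟩, hp.2.2, hp.2.1⟩
      · intro p _; rfl
      · intro p _; rfl
      · intro p _; rfl
    have hsum := Finset.sum_congr rfl hstep
    have hMM := MM_symm n S T
    omega

lemma NN_card (S' T' : Finset ℕ) :
    Nat.card {e : InvSeq n // Em0102 e = ↑S' ∧ Em0112 e = ↑T'} = NN n S' T' := by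
  classical
  rw [Nat.card_eq_fintype_card, Fintype.card_subtype]
  unfold NN
  congr 1
  apply Finset.filter_congr
  intro e _
  rw [← coe_occA n e, ← coe_occB n e]
  constructor
  · rintro ⟨h1, h2⟩
    exact ⟨Finset.coe_injective h1, Finset.coe_injective h2⟩
  · rintro ⟨h1, h2⟩
    exact ⟨by rw [h1], by rw [h2]⟩

end Count

end Recip

/-- The consecutive patterns 0102 and 0112 are reciprocal. -/
theorem reciprocal_0102_0112 (n : ℕ) (S T : Set ℕ) :
    Nat.card {e : InvSeq n // Em0102 e = S ∧ Em0112 e = T} =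
      Nat.card {e : InvSeq n // Em0102 e = T ∧ Em0112 e = S} := by
  classical
  by_cases hST : S ⊆ ↑(Finset.range n) ∧ T ⊆ ↑(Finset.range n)
  · obtain ⟨h1, h2⟩ := hST
    have hSf : S.Finite := Set.Finite.subset (Finset.range n).finite_toSet h1
    have hTf : T.Finite := Set.Finite.subset (Finset.range n).finite_toSet h2
    have eS : (hSf.toFinset : Set ℕ) = S := hSf.coe_toFinset
    have eT : (hTf.toFinset : Set ℕ) = T := hTf.coe_toFinset
    have hsub : hSf.toFinset ⊆ Finset.range n := by
      intro x hx
      exact Finset.mem_coe.mp (h1 (by rw [← eS]; exact Finset.mem_coe.mpr hx))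
    have htsub : hTf.toFinset ⊆ Finset.range n := by
      intro x hx
      exact Finset.mem_coe.mp (h2 (by rw [← eT]; exact Finset.mem_coe.mpr hx))
    rw [← eS, ← eT, Recip.NN_card, Recip.NN_card]
    exact Recip.NN_symm_aux n _ hSf.toFinset hTf.toFinset hsub htsub (le_refl _)
  · have hs102 : ∀ e : InvSeq n, Em0102 e ⊆ ↑(Finset.range n) := by
      intro e i hi
      simp only [Finset.coe_range, Set.mem_Iio]
      have := hi.1
      omega
    have hs112 : ∀ e : InvSeq n, Em0112 e ⊆ ↑(Finset.range n) := by
      intro e i hi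
      simp only [Finset.coe_range, Set.mem_Iio]
      have := hi.1
      omega
    have i1 : IsEmpty {e : InvSeq n // Em0102 e = S ∧ Em0112 e = T} :=
      ⟨fun ⟨e, hA, hB⟩ => hST ⟨hA ▸ hs102 e, hB ▸ hs112 e⟩⟩
    have i2 : IsEmpty {e : InvSeq n // Em0102 e = T ∧ Em0112 e = S} :=
      ⟨fun ⟨e, hA, hB⟩ => hST ⟨hB ▸ hs112 e, hA ▸ hs102 e⟩⟩
    rw [Nat.card_of_isEmpty, Nat.card_of_isEmpty]
end

section
/- The consecutive patterns 2120 and 2110 are reciprocal: for all n and all pairs of subsets S, T of [n], the number of inversion sequences e of length n with Em(2120, e) = S and Em(2110, e) = T equals the number with Em(2120, e) = T and Em(2110, e) = S. -/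
/-- Positions of occurrences of the consecutive pattern 2120
(`e i = e (i+2) > e (i+1) > e (i+3)`). -/
def Em2120 {n : ℕ} (e : InvSeq n) : Set ℕ :=
  {i | i + 3 < n ∧ ev e i = ev e (i+2) ∧ ev e (i+1) < ev e i ∧ ev e (i+3) < ev e (i+1)}

/-- Positions of occurrences of the consecutive pattern 2110
(`e i > e (i+1) = e (i+2) > e (i+3)`). -/
def Em2110 {n : ℕ} (e : InvSeq n) : Set ℕ :=
  {i | i + 3 < n ∧ ev e (i+1) < ev e i ∧ ev e (i+1) = ev e (i+2) ∧ ev e (i+3) < ev e (i+2)}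

section Counting

open Finset

theorem Nat.card_upper_eq_card_fiber_add_sum {Z β : Type*} [Finite Z] [Fintype β]
    [PartialOrder β] [DecidableLT β] (H : Z → β) (b : β) :
    Nat.card {z // b ≤ H z} =
      Nat.card {z // H z = b} + ∑ c with b < c, Nat.card {z // H z = c} := by
  classical
  have := Fintype.ofFinite Z
  have hge : univ.filter (b ≤ ·) = insert b (univ.filter (b < ·)) := by
    ext c; simp [le_iff_eq_or_lt, eq_comm]
  have hfiber (c : β) (hc : b ≤ c) : #{z ∈ {z | b ≤ H z} | H z = c} = #{z | H z = c} := by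
    rw [filter_filter]
    exact congrArg card <| filter_congr fun z _ => ⟨And.right, fun h => ⟨h ▸ hc, h⟩⟩
  simp only [Nat.card_eq_fintype_card, Fintype.card_subtype]
  rw [card_eq_sum_card_fiberwise (f := H) (t := univ.filter (b ≤ ·))
      (fun z hz => by simpa using hz), hge, sum_insert (by simp), hfiber b le_rfl,
    sum_congr rfl fun c hc => hfiber c (mem_filter.1 hc).2.le]

/-- Möbius inversion on a finite poset. -/
theorem Nat.card_fiber_eq_of_card_upper_eq {X Y β : Type*} [Finite X] [Finite Y] [Finite β]
    [PartialOrder β] (F : X → β) (G : Y → β)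
    (h : ∀ b, Nat.card {x // b ≤ F x} = Nat.card {y // b ≤ G y}) (b : β) :
    Nat.card {x // F x = b} = Nat.card {y // G y = b} := by
  classical
  have := Fintype.ofFinite β
  induction b using WellFoundedGT.induction with
  | _ b ih =>
    have hb := h b
    rw [Nat.card_upper_eq_card_fiber_add_sum F, Nat.card_upper_eq_card_fiber_add_sum G,
      sum_congr rfl fun c hc => ih c (by simpa using hc)] at hb
    exact Nat.add_right_cancel hb

end Counting

def Is2120At (g : ℕ → ℕ) (i : ℕ) : Prop :=
  g i = g (i + 2) ∧ g (i + 1) < g i ∧ g (i + 3) < g (i + 1)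

def Is2110At (g : ℕ → ℕ) (i : ℕ) : Prop :=
  g (i + 1) < g i ∧ g (i + 1) = g (i + 2) ∧ g (i + 3) < g (i + 2)

structure IsPatternMarking (S T : Set ℕ) (g : ℕ → ℕ) : Prop where
  is2120At : ∀ i ∈ S, Is2120At g i
  is2110At : ∀ i ∈ T, Is2110At g i

open Classical in
/-- Lowers the third entry of each 2120 marked by `S` to its second entry, making it a 2110, and
raises the third entry of each 2110 marked by `T` to the new first entry, making it a 2120. The
recursion is needed because marked 2110s can overlap: `a b b c c d` becomes `a b a c a d`. -/
noncomputable def swapPatterns (S T : Set ℕ) (g : ℕ → ℕ) : ℕ → ℕ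
  | 0 => g 0
  | 1 => g 1
  | q + 2 => if q ∈ S then g (q + 1) else if q ∈ T then swapPatterns S T g q else g (q + 2)

section swapPatterns

variable {S T : Set ℕ} {g : ℕ → ℕ} {q : ℕ}

theorem swapPatterns_add_two_of_mem_left (h : q ∈ S) :
    swapPatterns S T g (q + 2) = g (q + 1) := by
  simp [swapPatterns, h]

theorem swapPatterns_add_two_of_mem_right (hS : q ∉ S) (hT : q ∈ T) :
    swapPatterns S T g (q + 2) = swapPatterns S T g q := by
  simp [swapPatterns, hS, hT]

theorem swapPatterns_add_two_of_notMem (hS : q ∉ S) (hT : q ∉ T) :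
    swapPatterns S T g (q + 2) = g (q + 2) := by
  simp [swapPatterns, hS, hT]

theorem swapPatterns_le_self (hg : ∀ j, g j ≤ j) (j : ℕ) : swapPatterns S T g j ≤ j := by
  induction j using Nat.strong_induction_on with
  | _ j ih =>
    match j with
    | 0 | 1 => exact hg _
    | q + 2 =>
      by_cases hS : q ∈ S
      · rw [swapPatterns_add_two_of_mem_left hS]; exact (hg _).trans (by omega)
      by_cases hT : q ∈ T
      · rw [swapPatterns_add_two_of_mem_right hS hT]; exact (ih q (by omega)).trans (by omega)
      · rw [swapPatterns_add_two_of_notMem hS hT]; exact hg _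

end swapPatterns

namespace IsPatternMarking

variable {S T : Set ℕ} {g : ℕ → ℕ} {p : ℕ} (h : IsPatternMarking S T g)
include h

theorem succ_lt (hp : p ∈ S ∪ T) : g (p + 1) < g p := by
  rcases hp with hp | hp
  exacts [(h.is2120At p hp).2.1, (h.is2110At p hp).1]

theorem succ_notMem (hp : p ∈ S ∪ T) : p + 1 ∉ S ∪ T := by
  intro hp'
  have hlt : g (p + 2) < g (p + 1) := h.succ_lt hp'
  rcases hp with hp | hp
  · have := (h.is2120At p hp).1; have := (h.is2120At p hp).2.1; omega
  · have := (h.is2110At p hp).2.1; omega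

theorem disjoint : Disjoint S T :=
  Set.disjoint_left.2 fun p hpS hpT => by
    have := (h.is2120At p hpS).1; have := (h.is2120At p hpS).2.1
    have := (h.is2110At p hpT).2.1; omega

theorem swapPatterns_succ (hp : p ∈ S ∪ T) : swapPatterns S T g (p + 1) = g (p + 1) := by
  match p with
  | 0 => rfl
  | r + 1 =>
    have hr : r ∉ S ∪ T := fun hr => h.succ_notMem hr hp
    simp only [Set.mem_union, not_or] at hr
    exact swapPatterns_add_two_of_notMem hr.1 hr.2

theorem swapPatterns_add_three (hp : p ∈ S ∪ T) : swapPatterns S T g (p + 3) = g (p + 3) := by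
  have hp₁ := h.succ_notMem hp
  simp only [Set.mem_union, not_or] at hp₁
  exact swapPatterns_add_two_of_notMem hp₁.1 hp₁.2

theorem succ_lt_swapPatterns (hp : p ∈ S ∪ T) : g (p + 1) < swapPatterns S T g p := by
  induction p using Nat.strong_induction_on with
  | _ p ih =>
    match p with
    | 0 | 1 => exact h.succ_lt hp
    | q + 2 =>
      by_cases hqS : q ∈ S
      · rw [swapPatterns_add_two_of_mem_left hqS]; exact (h.is2120At q hqS).2.2
      by_cases hqT : q ∈ T
      · rw [swapPatterns_add_two_of_mem_right hqS hqT]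
        show g (q + 3) < _
        obtain ⟨-, hq₁, hq₂⟩ := h.is2110At q hqT
        have := ih q (by omega) (Or.inr hqT)
        omega
      · rw [swapPatterns_add_two_of_notMem hqS hqT]; exact h.succ_lt hp

theorem is2120At_swapPatterns (hp : p ∈ T) : Is2120At (swapPatterns S T g) p := by
  have h₁ := h.swapPatterns_succ (Or.inr hp)
  have h₂ := swapPatterns_add_two_of_mem_right (g := g) (h.disjoint.notMem_of_mem_right hp) hp
  have h₃ := h.swapPatterns_add_three (Or.inr hp)
  obtain ⟨-, hg₁, hg₂⟩ := h.is2110At p hp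
  have key := h.succ_lt_swapPatterns (Or.inr hp)
  refine ⟨h₂.symm, h₁ ▸ key, ?_⟩
  omega

theorem is2110At_swapPatterns (hp : p ∈ S) : Is2110At (swapPatterns S T g) p := by
  have h₁ := h.swapPatterns_succ (Or.inl hp)
  have h₂ := swapPatterns_add_two_of_mem_left (T := T) (g := g) hp
  have h₃ := h.swapPatterns_add_three (Or.inl hp)
  obtain ⟨-, -, hg⟩ := h.is2120At p hp
  have key := h.succ_lt_swapPatterns (Or.inl hp)
  refine ⟨h₁ ▸ key, h₁.trans h₂.symm, ?_⟩
  omega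

theorem swap : IsPatternMarking T S (swapPatterns S T g) :=
  ⟨fun _ => h.is2120At_swapPatterns, fun _ => h.is2110At_swapPatterns⟩

theorem swapPatterns_swapPatterns : swapPatterns T S (swapPatterns S T g) = g := by
  funext j
  induction j using Nat.strong_induction_on with
  | _ j ih =>
    match j with
    | 0 | 1 => rfl
    | q + 2 =>
      by_cases hqT : q ∈ T
      · rw [swapPatterns_add_two_of_mem_left hqT, h.swapPatterns_succ (Or.inr hqT)]
        exact (h.is2110At q hqT).2.1
      by_cases hqS : q ∈ S
      · rw [swapPatterns_add_two_of_mem_right hqT hqS, ih q (by omega)]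
        exact (h.is2120At q hqS).1
      · rw [swapPatterns_add_two_of_notMem hqT hqS, swapPatterns_add_two_of_notMem hqS hqT]

end IsPatternMarking

section InvSeq

variable {n : ℕ} {S T : Set ℕ} {e : InvSeq n}

theorem ev_le (e : InvSeq n) (j : ℕ) : ev e j ≤ j := by
  unfold ev
  split
  · exact Nat.lt_succ_iff.mp (Fin.is_lt _)
  · exact Nat.zero_le _

theorem ev_injective : Function.Injective (ev : InvSeq n → ℕ → ℕ) := fun e e' h =>
  funext fun i => Fin.ext <| by simpa [ev] using congrFun h i

theorem isPatternMarking_ev (h : S ⊆ Em2120 e ∧ T ⊆ Em2110 e) : IsPatternMarking S T (ev e) :=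
  ⟨fun _ hi => (h.1 hi).2, fun _ hi => (h.2 hi).2⟩

noncomputable def swapSeq (S T : Set ℕ) (e : InvSeq n) : InvSeq n :=
  fun i => ⟨swapPatterns S T (ev e) i, Nat.lt_succ_of_le (swapPatterns_le_self (ev_le e) i)⟩

theorem ev_swapSeq (h : S ⊆ Em2120 e ∧ T ⊆ Em2110 e) :
    ev (swapSeq S T e) = swapPatterns S T (ev e) := by
  funext j
  by_cases hj : j < n
  · simp [ev, hj, swapSeq]
  match j with
  | 0 | 1 => simp [ev, hj, swapPatterns]
  | q + 2 =>
    have hqS : q ∉ S := fun hq => hj (by have := (h.1 hq).1; omega)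
    have hqT : q ∉ T := fun hq => hj (by have := (h.2 hq).1; omega)
    rw [swapPatterns_add_two_of_notMem hqS hqT]
    simp [ev, hj]

theorem subset_Em_swapSeq (h : S ⊆ Em2120 e ∧ T ⊆ Em2110 e) :
    T ⊆ Em2120 (swapSeq S T e) ∧ S ⊆ Em2110 (swapSeq S T e) := by
  have hswap := (isPatternMarking_ev h).swap
  rw [← ev_swapSeq h] at hswap
  exact ⟨fun i hi => ⟨(h.2 hi).1, hswap.is2120At i hi⟩,
    fun i hi => ⟨(h.1 hi).1, hswap.is2110At i hi⟩⟩

theorem swapSeq_swapSeq (h : S ⊆ Em2120 e ∧ T ⊆ Em2110 e) : swapSeq T S (swapSeq S T e) = e :=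
  ev_injective <| by
    rw [ev_swapSeq (subset_Em_swapSeq h), ev_swapSeq h,
      (isPatternMarking_ev h).swapPatterns_swapPatterns]

noncomputable def swapSeqEquiv (S T : Set ℕ) :
    {e : InvSeq n // S ⊆ Em2120 e ∧ T ⊆ Em2110 e} ≃
      {e : InvSeq n // T ⊆ Em2120 e ∧ S ⊆ Em2110 e} where
  toFun e := ⟨swapSeq S T e, subset_Em_swapSeq e.2⟩
  invFun e := ⟨swapSeq T S e, subset_Em_swapSeq e.2⟩
  left_inv e := Subtype.ext (swapSeq_swapSeq e.2)
  right_inv e := Subtype.ext (swapSeq_swapSeq e.2)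

/-- The occurrence sets, as subsets of `Fin n` so that they range over a finite poset. -/
def occurrences (e : InvSeq n) : Set (Fin n) × Set (Fin n) :=
  (Fin.val ⁻¹' Em2120 e, Fin.val ⁻¹' Em2110 e)

theorem Em2120_subset_range (e : InvSeq n) : Em2120 e ⊆ Set.range (Fin.val : Fin n → ℕ) :=
  fun i hi => Fin.range_val ▸ Set.mem_Iio.2 (by have := hi.1; omega)

theorem Em2110_subset_range (e : InvSeq n) : Em2110 e ⊆ Set.range (Fin.val : Fin n → ℕ) :=
  fun i hi => Fin.range_val ▸ Set.mem_Iio.2 (by have := hi.1; omega)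

theorem le_occurrences_iff {A B : Set (Fin n)} :
    (A, B) ≤ occurrences e ↔ Fin.val '' A ⊆ Em2120 e ∧ Fin.val '' B ⊆ Em2110 e := by
  simp [occurrences, Set.image_subset_iff]

theorem occurrences_eq_iff {A B : Set (Fin n)} :
    occurrences e = (A, B) ↔ Em2120 e = Fin.val '' A ∧ Em2110 e = Fin.val '' B := by
  rw [← Set.image_preimage_eq_of_subset (Em2120_subset_range e),
    ← Set.image_preimage_eq_of_subset (Em2110_subset_range e),
    Set.image_eq_image Fin.val_injective, Set.image_eq_image Fin.val_injective, occurrences,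
    Prod.mk.injEq]

theorem card_le_occurrences_eq_card_le_swap (b : Set (Fin n) × Set (Fin n)) :
    Nat.card {e : InvSeq n // b ≤ occurrences e} =
      Nat.card {e : InvSeq n // b ≤ (occurrences e).swap} := by
  obtain ⟨A, B⟩ := b
  exact Nat.card_congr <| (Equiv.subtypeEquivRight fun e => le_occurrences_iff).trans <|
    (swapSeqEquiv _ _).trans <| Equiv.subtypeEquivRight fun e => by
      rw [← Prod.swap_le_swap, Prod.swap_swap, Prod.swap_prod_mk, le_occurrences_iff]

theorem isEmpty_of_not_subset_range {U V : Set ℕ}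
    (hUV : ¬(U ⊆ Set.range (Fin.val : Fin n → ℕ) ∧
      V ⊆ Set.range (Fin.val : Fin n → ℕ))) :
    IsEmpty {e : InvSeq n // Em2120 e = U ∧ Em2110 e = V} :=
  ⟨fun ⟨e, hU, hV⟩ =>
    hUV ⟨hU ▸ Em2120_subset_range e, hV ▸ Em2110_subset_range e⟩⟩

end InvSeq

/-- The consecutive patterns 2120 and 2110 are reciprocal. -/
theorem reciprocal_2120_2110 (n : ℕ) (S T : Set ℕ) :
    Nat.card {e : InvSeq n // Em2120 e = S ∧ Em2110 e = T} =
      Nat.card {e : InvSeq n // Em2120 e = T ∧ Em2110 e = S} := by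
  by_cases hST :
      S ⊆ Set.range (Fin.val : Fin n → ℕ) ∧ T ⊆ Set.range (Fin.val : Fin n → ℕ)
  · obtain ⟨⟨A, rfl⟩, ⟨B, rfl⟩⟩ := hST.imp Set.subset_range_iff_exists_image_eq.1
      Set.subset_range_iff_exists_image_eq.1
    calc Nat.card {e : InvSeq n // Em2120 e = Fin.val '' A ∧ Em2110 e = Fin.val '' B}
        = Nat.card {e : InvSeq n // occurrences e = (A, B)} :=
          Nat.card_congr (Equiv.subtypeEquivRight fun e => occurrences_eq_iff.symm)
      _ = Nat.card {e : InvSeq n // (occurrences e).swap = (A, B)} :=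
          Nat.card_fiber_eq_of_card_upper_eq _ _ card_le_occurrences_eq_card_le_swap _
      _ = Nat.card {e : InvSeq n // Em2120 e = Fin.val '' B ∧ Em2110 e = Fin.val '' A} :=
          Nat.card_congr (Equiv.subtypeEquivRight fun e => by
            rw [Prod.swap_eq_iff_eq_swap, Prod.swap_prod_mk, occurrences_eq_iff])
  · rw [Nat.card_eq_zero.2 (.inl (isEmpty_of_not_subset_range hST)),
      Nat.card_eq_zero.2 (.inl (isEmpty_of_not_subset_range (hST ∘ And.symm)))]
end

section
/- If an inversion sequence e has an occurrence of the consecutive pattern 0102 at position i, then replacing e_{i+2} by e_{i+1} yields an inversion sequence with an occurrence of 0112 at position i (the change operation from 0102 to 0112 is always valid). -/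
/-- Changing an occurrence of 0102 to 0112 is always valid: if an inversion
sequence `e` (0-indexed: `e i ≤ i`) has an occurrence of 0102 at position `i`
(`e i = e (i+2)`, `e i < e (i+1) < e (i+3)`), then replacing `e (i+2)` by
`e (i+1)` yields an inversion sequence with an occurrence of 0112 at `i`
(`e i < e (i+1) = e (i+2) < e (i+3)`). -/
theorem change_0102_to_0112 (n : ℕ) (e : ℕ → ℕ)
    (hinv : ∀ j, j < n → e j ≤ j)
    (i : ℕ) (hi : i + 3 < n)
    (hocc : e i = e (i+2) ∧ e i < e (i+1) ∧ e (i+1) < e (i+3)) :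
    let e' := Function.update e (i+2) (e (i+1))
    (∀ j, j < n → e' j ≤ j) ∧
      (e' i < e' (i+1) ∧ e' (i+1) = e' (i+2) ∧ e' (i+2) < e' (i+3)) := by
  obtain ⟨-, h01, h12⟩ := hocc
  have hle : e (i+1) ≤ i + 2 := (hinv (i+1) (by omega)).trans (Nat.le_succ _)
  refine ⟨(Function.forall_update_iff e fun j x => j < n → x ≤ j).2
    ⟨fun _ => hle, fun j _ => hinv j⟩, ?_⟩
  simp only [Function.update_self, Function.update_of_ne (by omega : i ≠ i+2),
    Function.update_of_ne (by omega : i+1 ≠ i+2), Function.update_of_ne (by omega : i+3 ≠ i+2)]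
  exact ⟨h01, trivial, h12⟩
end

section
/- If an inversion sequence e has an occurrence of 1000 at every position in a set T, then simultaneously replacing, for each i in T, the entries e_{i+1}, e_{i+2} by e_i (changing each 1000 occurrence into a 1110 occurrence) yields a well-defined inversion sequence with an occurrence of 1110 at every position of T. -/
/-! Two occurrences of 1000 are at least three positions apart, since the tail `e (i+1) = e (i+2) =
e (i+3)` of one cannot contain the strict descent that starts another. Hence the windows
`{i+1, i+2}`, `i ∈ T`, are disjoint and avoid `T` and `T + 3`, so copying `e i` into each window
leaves `e i` and `e (i+3)` untouched. Every new entry is an old entry from a position at most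
two to the left, so the bound `e j ≤ j` survives. -/

def Occurs1000 (e : ℕ → ℕ) (i : ℕ) : Prop :=
  e (i+1) < e i ∧ e (i+1) = e (i+2) ∧ e (i+2) = e (i+3)

theorem Occurs1000.add_three_le {e : ℕ → ℕ} {i i' : ℕ} (hi : Occurs1000 e i)
    (hi' : Occurs1000 e i') (hlt : i < i') : i + 3 ≤ i' := by
  obtain ⟨h₁, h₂, h₃⟩ := hi
  obtain ⟨h₁', -, -⟩ := hi'
  by_contra! hle
  obtain rfl | rfl : i' = i + 1 ∨ i' = i + 2 := by omega
  · exact h₁'.ne (h₂ ▸ rfl)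
  · exact h₁'.ne (h₃ ▸ rfl)

open Classical in
noncomputable def copyTwoForward (T : Set ℕ) (e : ℕ → ℕ) (j : ℕ) : ℕ :=
  if ∃ i ∈ T, j = i + 1 then e (j - 1)
  else if ∃ i ∈ T, j = i + 2 then e (j - 2)
  else e j

section copyTwoForward

variable {T : Set ℕ} {e : ℕ → ℕ} {i j : ℕ}

theorem copyTwoForward_add_one (hi : i ∈ T) : copyTwoForward T e (i + 1) = e i := by
  rw [copyTwoForward, if_pos ⟨i, hi, rfl⟩, Nat.add_sub_cancel]

theorem copyTwoForward_add_two (hsep : ∀ i ∈ T, ∀ i' ∈ T, i < i' → i + 3 ≤ i') (hi : i ∈ T) :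
    copyTwoForward T e (i + 2) = e i := by
  have hnot : ¬ ∃ i' ∈ T, i + 2 = i' + 1 := by
    rintro ⟨i', hi', h⟩
    have := hsep i hi i' hi' (by omega)
    omega
  rw [copyTwoForward, if_neg hnot, if_pos ⟨i, hi, rfl⟩, Nat.add_sub_cancel]

theorem copyTwoForward_of_not_mem_window (hj : ¬ ∃ i ∈ T, j = i + 1 ∨ j = i + 2) :
    copyTwoForward T e j = e j := by
  rw [copyTwoForward, if_neg, if_neg]
  · rintro ⟨i, hi, rfl⟩; exact hj ⟨i, hi, Or.inr rfl⟩
  · rintro ⟨i, hi, rfl⟩; exact hj ⟨i, hi, Or.inl rfl⟩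

theorem copyTwoForward_self (hsep : ∀ i ∈ T, ∀ i' ∈ T, i < i' → i + 3 ≤ i') (hi : i ∈ T) :
    copyTwoForward T e i = e i := by
  refine copyTwoForward_of_not_mem_window ?_
  rintro ⟨i', hi', h⟩
  have := hsep i' hi' i hi (by omega)
  omega

theorem copyTwoForward_add_three (hsep : ∀ i ∈ T, ∀ i' ∈ T, i < i' → i + 3 ≤ i')
    (hi : i ∈ T) : copyTwoForward T e (i + 3) = e (i + 3) := by
  refine copyTwoForward_of_not_mem_window ?_
  rintro ⟨i', hi', h⟩
  have := hsep i hi i' hi' (by omega)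
  omega

theorem exists_le_copyTwoForward_eq (T : Set ℕ) (e : ℕ → ℕ) (j : ℕ) :
    ∃ k ≤ j, copyTwoForward T e j = e k := by
  unfold copyTwoForward
  split_ifs
  exacts [⟨j - 1, by omega, rfl⟩, ⟨j - 2, by omega, rfl⟩, ⟨j, le_rfl, rfl⟩]

end copyTwoForward

/-- If an inversion sequence `e` (0-indexed: `e i ≤ i`) has an occurrence of 1000
(`e i > e (i+1) = e (i+2) = e (i+3)`) at every position in `T`, then
simultaneously replacing, for each `i ∈ T`, the entries at positions `i+1`, `i+2`
by `e i` yields a well-defined inversion sequence `e'` with an occurrence of 1110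
(`e' i = e' (i+1) = e' (i+2) > e' (i+3)`) at every position of `T`. -/
theorem change_all_1000_to_1110 (n : ℕ) (e : ℕ → ℕ)
    (hinv : ∀ j, j < n → e j ≤ j)
    (T : Set ℕ)
    (hT : ∀ i ∈ T, i + 3 < n ∧
      e (i+1) < e i ∧ e (i+1) = e (i+2) ∧ e (i+2) = e (i+3)) :
    ∃ e' : ℕ → ℕ,
      (∀ i ∈ T, e' (i+1) = e i ∧ e' (i+2) = e i) ∧
      (∀ j, (¬ ∃ i ∈ T, j = i + 1 ∨ j = i + 2) → e' j = e j) ∧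
      (∀ j, j < n → e' j ≤ j) ∧
      (∀ i ∈ T, e' i = e' (i+1) ∧ e' (i+1) = e' (i+2) ∧ e' (i+3) < e' (i+2)) := by
  have hsep : ∀ i ∈ T, ∀ i' ∈ T, i < i' → i + 3 ≤ i' := fun i hi i' hi' =>
    Occurs1000.add_three_le (hT i hi).2 (hT i' hi').2
  refine ⟨copyTwoForward T e,
    fun i hi => ⟨copyTwoForward_add_one hi, copyTwoForward_add_two hsep hi⟩,
    fun j => copyTwoForward_of_not_mem_window, fun j hj => ?_, fun i hi => ?_⟩
  · obtain ⟨k, hkj, hk⟩ := exists_le_copyTwoForward_eq T e j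
    rw [hk]
    exact (hinv k (by omega)).trans hkj
  · obtain ⟨-, hlt, h₁₂, h₂₃⟩ := hT i hi
    rw [copyTwoForward_self hsep hi, copyTwoForward_add_one hi, copyTwoForward_add_two hsep hi,
      copyTwoForward_add_three hsep hi]
    omega
end
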